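/- arXiv:1404.3516 — 7 statements merged into one kernel-verified Lean document; each statement's English description precedes it below -/
import Mathlib

section
/- Let (μ_n) be a sequence of probability measures on ℕ, let t > 0, and suppose for each n: τ_n ∈ (c, t] for some fixed c > 0, θ_n is a probability measure on ℕ, μ_n = CP(τ_n, θ_n), τ_n → τ, and θ_n converges in distribution to a probability measure θ on ℕ. Then μ_n converges in distribution to CP(τ, θ). -/
/-!
The mass of `CP(τ, θ)` at `k` is the Poisson mixture `∑ⱼ poisPMF τ j * θ^{*j}(k)`. Each term is
continuous in `τ` and, being a finite sum of products, in the masses of `θ`; so the terms converge.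
For `τ ∈ (0, t]` and a probability vector `θ` they are dominated by the summable `t ^ j / j!`,
and Tannery's theorem (dominated convergence for series) lets the limit pass through the sum.
-/

open scoped BigOperators
open Filter Topology

noncomputable def poisPMF (t : ℝ) (k : ℕ) : ℝ :=
  Real.exp (-t) * t ^ k / (Nat.factorial k)

noncomputable def convPow (ν : ℕ → ℝ) : ℕ → ℕ → ℝ
  | 0, k => if k = 0 then 1 else 0
  | (j + 1), k => ∑ i ∈ Finset.range (k + 1), ν i * convPow ν j (k - i)

/-- The compound Poisson distribution `CP(t, ν)`. -/
noncomputable def compoundPoisson (t : ℝ) (ν : ℕ → ℝ) (k : ℕ) : ℝ :=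
  ∑' j : ℕ, poisPMF t j * convPow ν j k

lemma continuous_poisPMF (j : ℕ) : Continuous fun t => poisPMF t j := by
  unfold poisPMF
  fun_prop

lemma poisPMF_nonneg {t : ℝ} (ht : 0 ≤ t) (j : ℕ) : 0 ≤ poisPMF t j := by
  unfold poisPMF
  positivity

lemma poisPMF_le_pow_div_factorial {s t : ℝ} (hs : 0 ≤ s) (hst : s ≤ t) (j : ℕ) :
    poisPMF s j ≤ t ^ j / j.factorial := by
  unfold poisPMF
  gcongr
  calc Real.exp (-s) * s ^ j ≤ 1 * s ^ j := by
        gcongr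
        exact Real.exp_le_one_iff.mpr (neg_nonpos.mpr hs)
    _ ≤ t ^ j := by rw [one_mul]; gcongr

lemma convPow_nonneg {ν : ℕ → ℝ} (hν : ∀ i, 0 ≤ ν i) (j k : ℕ) : 0 ≤ convPow ν j k := by
  induction j generalizing k with
  | zero => unfold convPow; split_ifs <;> norm_num
  | succ j ih => exact Finset.sum_nonneg fun i _ => mul_nonneg (hν i) (ih _)

lemma convPow_le_one {ν : ℕ → ℝ} (hν : ∀ i, 0 ≤ ν i) (hsum : Summable ν)
    (h1 : ∑' i, ν i ≤ 1) (j k : ℕ) : convPow ν j k ≤ 1 := by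
  induction j generalizing k with
  | zero => unfold convPow; split_ifs <;> norm_num
  | succ j ih =>
    calc ∑ i ∈ Finset.range (k + 1), ν i * convPow ν j (k - i)
        ≤ ∑ i ∈ Finset.range (k + 1), ν i :=
          Finset.sum_le_sum fun i _ => mul_le_of_le_one_right (hν i) (ih _)
      _ ≤ ∑' i, ν i := hsum.sum_le_tsum _ fun i _ => hν i
      _ ≤ 1 := h1

lemma tendsto_convPow {α : Type*} {l : Filter α} {ν : α → ℕ → ℝ} {ν₀ : ℕ → ℝ}
    (hν : ∀ i, Tendsto (fun a => ν a i) l (𝓝 (ν₀ i))) (j k : ℕ) :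
    Tendsto (fun a => convPow (ν a) j k) l (𝓝 (convPow ν₀ j k)) := by
  induction j generalizing k with
  | zero => exact tendsto_const_nhds
  | succ j ih => exact tendsto_finsetSum _ fun i _ => (hν i).mul (ih _)

theorem compoundPoisson_tendsto_general (t c : ℝ) (hc : 0 < c)
    (τ : ℕ → ℝ) (θ : ℕ → ℕ → ℝ) (τlim : ℝ) (θlim : ℕ → ℝ)
    (hτmem : ∀ n, τ n ∈ Set.Ioc c t)
    (hθ0 : ∀ n k, 0 ≤ θ n k) (hθ1 : ∀ n, ∑' k, θ n k = 1)
    (hτ : Tendsto τ atTop (𝓝 τlim))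
    (hθ : ∀ k, Tendsto (fun n => θ n k) atTop (𝓝 (θlim k))) :
    ∀ k, Tendsto (fun n => compoundPoisson (τ n) (θ n) k) atTop
      (𝓝 (compoundPoisson τlim θlim k)) := by
  intro k
  have hτpos : ∀ n, 0 ≤ τ n := fun n => (hc.trans (hτmem n).1).le
  have hθsum : ∀ n, Summable (θ n) := fun n =>
    by_contra fun h => zero_ne_one ((tsum_eq_zero_of_not_summable h).symm.trans (hθ1 n))
  refine tendsto_tsum_of_dominated_convergence (Real.summable_pow_div_factorial t)
    (fun j => ((continuous_poisPMF j).tendsto τlim |>.comp hτ).mul (tendsto_convPow hθ j k))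
    (Eventually.of_forall fun n j => ?_)
  have hpois := poisPMF_nonneg (hτpos n) j
  rw [Real.norm_of_nonneg (mul_nonneg hpois (convPow_nonneg (hθ0 n) j k))]
  calc poisPMF (τ n) j * convPow (θ n) j k ≤ poisPMF (τ n) j :=
        mul_le_of_le_one_right hpois (convPow_le_one (hθ0 n) (hθsum n) (hθ1 n).le j k)
    _ ≤ t ^ j / j.factorial := poisPMF_le_pow_div_factorial (hτpos n) (hτmem n).2 j

/-- if `μ_n = CP(τ_n, θ_n)` with `τ_n ∈ (c, t]`, `τ_n → τ`, and the
probability measures `θ_n` on ℕ converge in distribution (i.e. pointwise on pmfs)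
to a probability measure `θ` on ℕ, then `μ_n` converges in distribution to `CP(τ, θ)`. -/
theorem compoundPoisson_tendsto (t c : ℝ) (ht : 0 < t) (hc : 0 < c)
    (τ : ℕ → ℝ) (θ : ℕ → ℕ → ℝ) (τlim : ℝ) (θlim : ℕ → ℝ)
    (hτmem : ∀ n, τ n ∈ Set.Ioc c t)
    (hθ0 : ∀ n k, 0 ≤ θ n k) (hθ1 : ∀ n, ∑' k, θ n k = 1)
    (hθlim0 : ∀ k, 0 ≤ θlim k) (hθlim1 : ∑' k, θlim k = 1)
    (hτ : Tendsto τ atTop (𝓝 τlim))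
    (hθ : ∀ k, Tendsto (fun n => θ n k) atTop (𝓝 (θlim k))) :
    ∀ k, Tendsto (fun n => compoundPoisson (τ n) (θ n) k) atTop
      (𝓝 (compoundPoisson τlim θlim k)) :=
  compoundPoisson_tendsto_general t c hc τ θ τlim θlim hτmem hθ0 hθ1 hτ hθ
end

section
/- Let (G,+) be a finite abelian group, (p_g)_{g∈G} ⊂ (0,1) with ∑ p_g = 1, ℙ the Bernoulli product measure on G^ℕ, N ≥ 2, Φ the map (Φω)_j = ω_j + ... + ω_{j+N−1}, and ℙ₀ = ℙ∘Φ^{-1}. Let λ = min_{g∈G} p_g. Then for every n ≥ 1 and g_0,...,g_{n-1} ∈ G and every 0 ≤ m < N: ℙ₀[g_0,...,g_{n−N}] ≤ λ^{-m} ℙ₀[g_0,...,g_{n+m−N}], where a cylinder over an empty or negative index range is the whole space. -/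
open MeasureTheory
open scoped BigOperators

/-- The sliding-window sum map of width `N`: `(Φω)_j = ω_j + ⋯ + ω_{j+N−1}`. -/
def windowSum {G : Type*} [AddCommMonoid G] (N : ℕ) (ω : ℕ → G) : ℕ → G :=
  fun j => ∑ i ∈ Finset.range N, ω (j + i)

/-!
Write `A_k` for the set of `ω` whose first `k` window sums are `g_0, …, g_{k-1}`, so that
`ℙ₀[g_0, …, g_{k-1}] = ℙ(A_k)`. Since `A_k` depends only on `ω_0, …, ω_{k+N-2}`, and
`ω ∈ A_{k+1}` means `ω ∈ A_k` and `ω_{k+N-1} = g_k - (ω_k + ⋯ + ω_{k+N-2})`, fixing that one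
further letter costs at most a factor `λ` on each cylinder of length `k + N - 1`, whence
`λ ℙ(A_k) ≤ ℙ(A_{k+1})`. Iterating at most `m` times gives the bound.
-/

section Cylinder

variable {G : Type*} [MeasurableSpace G] [MeasurableSingletonClass G]

theorem measurableSet_setOf_forall_lt_eq (L : ℕ) (v : ℕ → G) :
    MeasurableSet {ω : ℕ → G | ∀ i < L, ω i = v i} := by
  measurability

theorem mul_measure_le_measure_inter_of_cylinder_succ [Finite G] {μ : Measure (ℕ → G)}
    {c : ENNReal} {L : ℕ}
    (hμ : ∀ v : ℕ → G, c * μ {ω | ∀ i < L, ω i = v i} ≤ μ {ω | ∀ i < L + 1, ω i = v i})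
    {S : Set (ℕ → G)} {f : (ℕ → G) → G}
    (hS : ∀ ω ω' : ℕ → G, (∀ i < L, ω i = ω' i) → ω ∈ S → ω' ∈ S)
    (hf : ∀ ω ω' : ℕ → G, (∀ i < L, ω i = ω' i) → f ω = f ω') :
    c * μ S ≤ μ (S ∩ {ω | ω L = f ω}) := by
  classical
  have := Fintype.ofFinite G
  rcases S.eq_empty_or_nonempty with rfl | ⟨ω₀, -⟩
  · simp
  have : Nonempty (ℕ → G) := ⟨ω₀⟩
  let π : (ℕ → G) → (Fin L → G) := fun ω i => ω i
  let T : Finset (Fin L → G) := {w | w ∈ π '' S}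
  have hrep : ∀ w ∈ T, ∃ ω ∈ S, π ω = w := fun w hw => by simpa [T] using hw
  choose! r hrS hrπ using hrep
  -- On the cylinder of each prefix `w` of `S`, imposing `ω_L = f ω` is fixing one more letter.
  let v : (Fin L → G) → ℕ → G := fun w => Function.update (r w) L (f (r w))
  have hv : ∀ w, ∀ i < L, v w i = r w i := fun w i hi =>
    Function.update_of_ne hi.ne _ _
  have hcover : S ⊆ ⋃ w ∈ T, {ω | ∀ i < L, ω i = v w i} := by
    intro ω hω
    have hT : π ω ∈ T := by simpa [T] using ⟨ω, hω, rfl⟩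
    refine Set.mem_biUnion hT fun i hi => ?_
    rw [hv _ i hi]
    exact (congrFun (hrπ _ hT) ⟨i, hi⟩).symm
  have hpiece : ∀ w ∈ T, {ω | ∀ i < L + 1, ω i = v w i} ⊆ S ∩ {ω | ω L = f ω} := by
    intro w hw ω hω
    have hagree : ∀ i < L, r w i = ω i := fun i hi => by rw [hω i (by omega), hv w i hi]
    refine ⟨hS _ _ hagree (hrS w hw), ?_⟩
    simp only [Set.mem_ofPred_eq, hω L (by omega), v, Function.update_self, hf _ _ hagree]
  have hdisj : (T : Set (Fin L → G)).PairwiseDisjoint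
      fun w => {ω : ℕ → G | ∀ i < L + 1, ω i = v w i} := by
    intro w hw w' hw' hne
    refine Set.disjoint_left.2 fun ω hω hω' => hne ?_
    rw [← hrπ w hw, ← hrπ w' hw']
    funext i
    simp only [π, ← hv w i i.2, ← hv w' i i.2, ← hω i (by omega), ← hω' i (by omega)]
  calc c * μ S ≤ c * ∑ w ∈ T, μ {ω | ∀ i < L, ω i = v w i} := by
        gcongr
        exact (measure_mono hcover).trans (measure_biUnion_finset_le _ _)
    _ = ∑ w ∈ T, c * μ {ω | ∀ i < L, ω i = v w i} := Finset.mul_sum _ _ _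
    _ ≤ ∑ w ∈ T, μ {ω | ∀ i < L + 1, ω i = v w i} := Finset.sum_le_sum fun w _ => hμ (v w)
    _ = μ (⋃ w ∈ T, {ω | ∀ i < L + 1, ω i = v w i}) :=
        (measure_biUnion_finset hdisj fun w _ => measurableSet_setOf_forall_lt_eq _ _).symm
    _ ≤ μ (S ∩ {ω | ω L = f ω}) := measure_mono (Set.iUnion₂_subset hpiece)

end Cylinder

theorem ofReal_mul_le_of_cylinder_eq_prod {G : Type*} [MeasurableSpace G]
    {p : G → ℝ} (hp : ∀ g, 0 ≤ p g) {lam : ℝ} (hlam : lam ∈ lowerBounds (Set.range p))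
    {μ : Measure (ℕ → G)}
    (hμ : ∀ (n : ℕ) (w : ℕ → G),
      μ {ω | ∀ i < n, ω i = w i} = ENNReal.ofReal (∏ i ∈ Finset.range n, p (w i)))
    (L : ℕ) (v : ℕ → G) :
    ENNReal.ofReal lam * μ {ω | ∀ i < L, ω i = v i} ≤ μ {ω | ∀ i < L + 1, ω i = v i} := by
  rw [hμ, hμ, Finset.prod_range_succ, ENNReal.ofReal_mul' (hp _), mul_comm]
  gcongr
  exact hlam ⟨v L, rfl⟩

section WindowSum

variable {G : Type*}

theorem windowSum_congr [AddCommMonoid G] {N i : ℕ} {ω ω' : ℕ → G}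
    (h : ∀ j < i + N, ω j = ω' j) : windowSum N ω i = windowSum N ω' i :=
  Finset.sum_congr rfl fun j hj => h _ (by simp at hj; omega)

theorem measurable_windowSum [AddCommMonoid G] [Finite G] [MeasurableSpace G]
    [MeasurableSingletonClass G] (N : ℕ) : Measurable (windowSum N : (ℕ → G) → ℕ → G) := by
  have := Fintype.ofFinite G
  unfold windowSum
  fun_prop

theorem mul_measure_windowSum_le_succ [AddCommGroup G] [Finite G] [MeasurableSpace G]
    [MeasurableSingletonClass G] {μ : Measure (ℕ → G)} {c : ENNReal} {N : ℕ} (hN : 1 ≤ N)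
    (hμ : ∀ (L : ℕ) (v : ℕ → G),
      c * μ {ω | ∀ i < L, ω i = v i} ≤ μ {ω | ∀ i < L + 1, ω i = v i})
    (g : ℕ → G) (k : ℕ) :
    c * μ {ω | ∀ i < k, windowSum N ω i = g i} ≤
      μ {ω | ∀ i < k + 1, windowSum N ω i = g i} := by
  obtain ⟨M, rfl⟩ : ∃ M, N = M + 1 := ⟨N - 1, by omega⟩
  refine (mul_measure_le_measure_inter_of_cylinder_succ (L := k + M) (hμ _)
    (f := fun ω => g k - ∑ j ∈ Finset.range M, ω (k + j)) ?_ ?_).trans (measure_mono ?_)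
  · intro ω ω' h hω i hi
    rw [← windowSum_congr fun j hj => h j (by omega)]
    exact hω i hi
  · intro ω ω' h
    exact congrArg (g k - ·) (Finset.sum_congr rfl fun j hj => h _ (by simp at hj; omega))
  · rintro ω ⟨hω, hlast⟩ i hi
    rcases Nat.lt_succ_iff_lt_or_eq.1 hi with hi | rfl
    · exact hω i hi
    · simp only [Set.mem_ofPred_eq] at hlast
      rw [windowSum, Finset.sum_range_succ, hlast, add_sub_cancel]

end WindowSum

theorem ENNReal.le_inv_pow_mul_of_forall_mul_le_succ {B : ℕ → ENNReal} {c : ENNReal}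
    (hc0 : c ≠ 0) (hc1 : c ≤ 1) (hB : ∀ k, c * B k ≤ B (k + 1)) {k l m : ℕ}
    (hkl : k ≤ l) (hlk : l ≤ k + m) : B k ≤ c⁻¹ ^ m * B l := by
  obtain ⟨j, rfl⟩ := Nat.exists_eq_add_of_le hkl
  have hpow : c ^ j * B k ≤ B (k + j) := by
    induction j with
    | zero => simp
    | succ j ih =>
      calc c ^ (j + 1) * B k = c * (c ^ j * B k) := by ring
        _ ≤ c * B (k + j) := by gcongr; exact ih (by omega) (by omega)
        _ ≤ B (k + (j + 1)) := hB _
  have hc_top : c ≠ ⊤ := ne_top_of_le_ne_top one_ne_top hc1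
  calc B k = c⁻¹ ^ j * (c ^ j * B k) := by
        rw [← mul_assoc, ← mul_pow, ENNReal.inv_mul_cancel hc0 hc_top, one_pow, one_mul]
    _ ≤ c⁻¹ ^ m * B (k + j) := by
        gcongr
        · exact ENNReal.one_le_inv.2 hc1
        · omega

theorem windowSum_cylinder_bound_general {G : Type*} [AddCommGroup G] [Fintype G]
    [MeasurableSpace G] [MeasurableSingletonClass G]
    (p : G → ℝ) (hp : ∀ g, p g ∈ Set.Ioo (0 : ℝ) 1)
    (lam : ℝ) (hlam : IsLeast (Set.range p) lam)
    (ℙ : Measure (ℕ → G))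
    (hbern : ∀ (n : ℕ) (w : ℕ → G),
      ℙ {ω | ∀ i < n, ω i = w i} = ENNReal.ofReal (∏ i ∈ Finset.range n, p (w i)))
    (N : ℕ)
    (n : ℕ) (g : ℕ → G) (m : ℕ) (hm : m < N) :
    ℙ.map (windowSum N) {ω | ∀ i < n + 1 - N, ω i = g i} ≤
      (ENNReal.ofReal lam)⁻¹ ^ m *
        ℙ.map (windowSum N) {ω | ∀ i < n + m + 1 - N, ω i = g i} := by
  obtain ⟨g₀, hg₀⟩ := hlam.1
  have hstep := mul_measure_windowSum_le_succ (N := N) (by omega)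
    (ofReal_mul_le_of_cylinder_eq_prod (fun g => (hp g).1.le) hlam.2 hbern) g
  simp only [Measure.map_apply (measurable_windowSum N) (measurableSet_setOf_forall_lt_eq _ g)]
  refine ENNReal.le_inv_pow_mul_of_forall_mul_le_succ (k := n + 1 - N) (l := n + m + 1 - N)
    (m := m) ?_ ?_ hstep (by omega) (by omega)
  · exact (ENNReal.ofReal_pos.2 (hg₀ ▸ (hp g₀).1)).ne'
  · exact ENNReal.ofReal_le_one.2 (hg₀ ▸ (hp g₀).2.le)

/-- with `ℙ₀ = ℙ∘Φ⁻¹` the pushforward of the Bernoulli measure under the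
width-`N` sliding sum, and `λ = min_g p_g`, for every `n ≥ 1`, word `g` and `0 ≤ m < N`:
`ℙ₀[g_0,…,g_{n−N}] ≤ λ^{-m} ℙ₀[g_0,…,g_{n+m−N}]` (cylinders over an empty or negative
index range being the whole space, via truncated subtraction). -/
theorem windowSum_cylinder_bound {G : Type*} [AddCommGroup G] [Fintype G]
    [MeasurableSpace G] [MeasurableSingletonClass G]
    (p : G → ℝ) (hp : ∀ g, p g ∈ Set.Ioo (0 : ℝ) 1) (hsum : ∑ g, p g = 1)
    (lam : ℝ) (hlam : IsLeast (Set.range p) lam)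
    (ℙ : Measure (ℕ → G)) [IsProbabilityMeasure ℙ]
    (hbern : ∀ (n : ℕ) (w : ℕ → G),
      ℙ {ω | ∀ i < n, ω i = w i} = ENNReal.ofReal (∏ i ∈ Finset.range n, p (w i)))
    (N : ℕ) (hN : 2 ≤ N)
    (n : ℕ) (hn : 1 ≤ n) (g : ℕ → G) (m : ℕ) (hm : m < N) :
    ℙ.map (windowSum N) {ω | ∀ i < n + 1 - N, ω i = g i} ≤
      (ENNReal.ofReal lam)⁻¹ ^ m *
        ℙ.map (windowSum N) {ω | ∀ i < n + m + 1 - N, ω i = g i} :=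
  windowSum_cylinder_bound_general p hp lam hlam ℙ hbern N n g m hm
end

section
/- Let G be a finite abelian group, (p_g)_{g∈G} strictly positive probabilities summing to 1, with a unique maximizer h (p_h > p_g for all g ≠ h), and let r ≠ h maximize p over G∖{h}. Assume p_h ≠ p_r (automatic). Then with N ≥ 2, Φ the width-N sliding sum, ℙ₀ = ℙ∘Φ^{-1}, and s = (N−1)·h + r, the limit lim_n ℙ₀([s^{n+1}] | [s^n]) does not exist; along n with n+N−1 ≡ 0 mod N the ratio tends to (p_r + (N−1)p_h)/N, while along n with n+N−1 ≡ N−1 mod N it tends to N p_h p_r / ((N−1)p_r + p_h), and these two values are distinct. -/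
open MeasureTheory Filter Topology
open scoped BigOperators

/-!
A word whose width-`N` window sums equal `s` on `[0, n)` is `N`-periodic on `[0, n + N - 1)`, so
`ℙ₀[s^n]` is a sum over periods `a : Fin N → G` with `∑ a = s` of
`(∏ x, p (a x)) ^ q * ∏ i < t, p (a i)`, where `n + N - 1 = q * N + t`. On such periods the full
product is maximal, equal to `p r * p h ^ (N - 1)`, exactly at the `N` rotations of
`(r, h, …, h)`. Hence as `q → ∞` the ratio `ℙ₀[s^(n+1)] / ℙ₀[s^n]` becomes a quotient of sums
over these rotations that depends on `t`: passing from `t = 0` to `t = 1` gives the arithmetic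
mean of `p r, p h, …, p h`, passing from `t = N - 1` to `t = N` their harmonic mean, and the two
differ because `p r ≠ p h`.
-/

open Finset

/-- `ℙ₀[s^n]` in the paper's notation, where `ℙ₀ = ℙ ∘ Φ⁻¹` and `Φ = windowSum N`. -/
noncomputable def constCylinderMass {G : Type*} [AddCommMonoid G] [MeasurableSpace G]
    (ℙ : Measure (ℕ → G)) (N : ℕ) (s : G) (n : ℕ) : ℝ :=
  (ℙ.map (windowSum N) {ω | ∀ i < n, ω i = s}).toReal

section WindowSum

open Fin.NatCast

@[to_additive]
theorem Fin.prod_range_natCast_add {M : Type*} [CommMonoid M] {N : ℕ} [NeZero N]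
    (g : Fin N → M) (i : ℕ) : ∏ j ∈ range N, g ((i + j : ℕ) : Fin N) = ∏ x, g x := by
  rw [← Fin.prod_univ_eq_prod_range (fun j => g ((i + j : ℕ) : Fin N))]
  simp only [Nat.cast_add, Fin.cast_val_eq_self]
  exact Equiv.prod_comp (Equiv.addLeft (i : Fin N)) g

theorem Fin.prod_range_natCast {M : Type*} [CommMonoid M] {N : ℕ} [NeZero N] (g : Fin N → M) :
    ∏ i ∈ range N, g i = ∏ x, g x := by
  simpa using Fin.prod_range_natCast_add g 0

theorem Fin.prod_range_mul_add {M : Type*} [CommMonoid M] {N : ℕ} [NeZero N]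
    (g : Fin N → M) (q t : ℕ) :
    ∏ i ∈ range (q * N + t), g i = (∏ x, g x) ^ q * ∏ i ∈ range t, g i := by
  induction q with
  | zero => simp
  | succ q ih =>
    rw [show (q + 1) * N + t = q * N + t + N by ring, prod_range_add, ih,
      Fin.prod_range_natCast_add, pow_succ, mul_right_comm]

theorem apply_eq_apply_mod_of_add_eq {X : Type*} {N m : ℕ} {ω : ℕ → X}
    (hω : ∀ i < m, ω (i + N) = ω i) : ∀ i < m + N, ω i = ω (i % N) := by
  rcases Nat.eq_zero_or_pos N with rfl | hN
  · simp
  intro i hi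
  induction i using Nat.strong_induction_on with
  | _ i ih =>
    rcases lt_or_ge i N with hiN | hiN
    · rw [Nat.mod_eq_of_lt hiN]
    · obtain ⟨j, rfl⟩ := Nat.exists_eq_add_of_le' hiN
      rw [hω j (by omega), Nat.add_mod_right, ih j (by omega) (by omega)]

theorem windowSum_succ_add {G : Type*} [AddCommMonoid G] (N : ℕ) (ω : ℕ → G) (j : ℕ) :
    windowSum N ω (j + 1) + ω j = windowSum N ω j + ω (j + N) := by
  simp only [windowSum]
  rw [← sum_range_succ (fun i => ω (j + i)), sum_range_succ', add_zero]
  simp only [add_assoc, add_comm 1]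

theorem windowSum_eq_const_iff {G : Type*} [AddCommGroup G] {N : ℕ} [NeZero N]
    (ω : ℕ → G) (s : G) (m : ℕ) :
    (∀ i < m + 1, windowSum N ω i = s) ↔
      ∃ a : Fin N → G, ∑ x, a x = s ∧ ∀ i < m + N, ω i = a i := by
  constructor
  · intro hω
    have hper : ∀ i < m, ω (i + N) = ω i := fun i hi => by
      have := windowSum_succ_add N ω i
      rw [hω i (by omega), hω (i + 1) (by omega)] at this
      exact (add_left_cancel this).symm
    refine ⟨fun x => ω x, ?_, fun i hi => ?_⟩
    · simpa [windowSum, Fin.sum_univ_eq_sum_range (fun i => ω i)] using hω 0 (by omega)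
    · show ω i = ω ((i : Fin N) : ℕ)
      rw [Fin.val_natCast]
      exact apply_eq_apply_mod_of_add_eq hper i hi
  · rintro ⟨a, ha, hωa⟩ i hi
    rw [windowSum, sum_congr rfl fun j hj => hωa (i + j) (by simp at hj; omega),
      Fin.sum_range_natCast_add, ha]

theorem preimage_windowSum_setOf_forall_eq {G : Type*} [AddCommGroup G] [Fintype G]
    [DecidableEq G] {N : ℕ} [NeZero N] (s : G) (m : ℕ) :
    windowSum N ⁻¹' {ω | ∀ i < m + 1, ω i = s} =
      ⋃ a ∈ ({a | ∑ x, a x = s} : Finset (Fin N → G)), {ω | ∀ i < m + N, ω i = a i} := by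
  ext ω
  simpa using windowSum_eq_const_iff ω s m

theorem pairwiseDisjoint_setOf_forall_eq {X : Type*} {N : ℕ} [NeZero N] (S : Finset (Fin N → X))
    (n : ℕ) (hn : N ≤ n) :
    (S : Set (Fin N → X)).PairwiseDisjoint fun a => {ω : ℕ → X | ∀ i < n, ω i = a i} := by
  refine fun a _ b _ hab => Set.disjoint_left.2 fun ω ha hb => hab (funext fun x => ?_)
  have hx : (x : ℕ) < n := by omega
  simpa using (ha x hx).symm.trans (hb x hx)

theorem constCylinderMass_succ {G : Type*} [AddCommGroup G] [Fintype G] [DecidableEq G]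
    [MeasurableSpace G] [MeasurableSingletonClass G] {p : G → ℝ} (hp : ∀ g, 0 ≤ p g)
    {ℙ : Measure (ℕ → G)}
    (hbern : ∀ (n : ℕ) (w : ℕ → G),
      ℙ {ω | ∀ i < n, ω i = w i} = ENNReal.ofReal (∏ i ∈ range n, p (w i)))
    {N : ℕ} [NeZero N] (s : G) (m : ℕ) :
    constCylinderMass ℙ N s (m + 1) =
      ∑ a : Fin N → G with ∑ x, a x = s, ∏ i ∈ range (m + N), p (a i) := by
  have hcyl (n : ℕ) (w : ℕ → G) : MeasurableSet {ω : ℕ → G | ∀ i < n, ω i = w i} :=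
    MeasurableSet.pi (Set.to_countable _) fun _ _ => measurableSet_singleton _
  have hmeas : Measurable (windowSum (G := G) N) :=
    measurable_pi_lambda _ fun _ => Finset.measurable_sum _ fun _ _ => measurable_pi_apply _
  rw [constCylinderMass, Measure.map_apply hmeas (hcyl _ fun _ => s),
    preimage_windowSum_setOf_forall_eq,
    measure_biUnion_finset (pairwiseDisjoint_setOf_forall_eq _ _ (by omega))
      fun a _ => hcyl _ fun i => a i, sum_congr rfl fun a _ => hbern _ _,
    ENNReal.toReal_sum fun _ _ => ENNReal.ofReal_ne_top]
  exact sum_congr rfl fun a _ => ENNReal.toReal_ofReal (prod_nonneg fun _ _ => hp _)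

end WindowSum

section Spike

variable {ι G : Type*} [DecidableEq ι]

def spike (h r : G) (j : ι) : ι → G := fun i => if i = j then r else h

theorem spike_apply_comm (h r : G) (i j : ι) : spike h r j i = spike h r i j := by
  simp only [spike, eq_comm]

theorem spike_injective {h r : G} (hr : r ≠ h) : Function.Injective (spike (ι := ι) h r) := by
  intro j k hjk
  by_contra hne
  simpa [spike, hne, hr] using congrFun hjk j

@[to_additive]
theorem prod_comp_spike [Fintype ι] {M : Type*} [CommMonoid M] (f : G → M) (h r : G) (j : ι) :
    ∏ i, f (spike h r j i) = f r * f h ^ (Fintype.card ι - 1) := by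
  rw [Fintype.prod_eq_mul_prod_compl j,
    prod_congr rfl fun i hi => by rw [spike, if_neg (by simpa using hi)], prod_const,
    card_compl, card_singleton]
  simp [spike]

theorem sum_spike [Fintype ι] [AddCommMonoid G] (h r : G) (j : ι) :
    ∑ i, spike h r j i = r + (Fintype.card ι - 1) • h :=
  sum_comp_spike id h r j

variable [Fintype ι] [AddCommGroup G] {p : G → ℝ} {h r : G}

theorem prod_lt_of_forall_ne_spike [Nonempty ι] (hp : ∀ g, 0 < p g)
    (hh : ∀ g, g ≠ h → p g < p h) (hrmax : ∀ g, g ≠ h → p g ≤ p r) {a : ι → G}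
    (ha : ∑ i, a i = (Fintype.card ι - 1) • h + r) (hspike : ∀ j, a ≠ spike h r j) :
    ∏ i, p (a i) < p r * p h ^ (Fintype.card ι - 1) := by
  by_cases hsingle : ∃ j, ∀ i ≠ j, a i = h
  · obtain ⟨j, hj⟩ := hsingle
    have ha_eq : a = spike h (a j) j := funext fun i => by
      by_cases hij : i = j <;> simp [spike, hij, hj]
    rw [ha_eq, sum_spike, add_comm] at ha
    exact absurd (ha_eq.trans (by rw [add_left_cancel ha])) (hspike j)
  · push Not at hsingle
    obtain ⟨j, -, hj⟩ := hsingle (Classical.arbitrary ι)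
    obtain ⟨i, hij, hi⟩ := hsingle j
    calc ∏ k, p (a k) < ∏ k, p (spike h r j k) := by
          refine prod_lt_prod (fun k _ => hp _) (fun k _ => ?_) ⟨i, mem_univ i, ?_⟩
          · by_cases hkj : k = j
            · simpa [spike, hkj] using hrmax _ hj
            · rcases eq_or_ne (a k) h with hk | hk <;> simp [spike, hkj, hk, (hh _ _).le]
          · simpa [spike, hij] using hh _ hi
      _ = p r * p h ^ (Fintype.card ι - 1) := prod_comp_spike p h r j

theorem prod_le_of_sum_eq [Nonempty ι] (hp : ∀ g, 0 < p g)
    (hh : ∀ g, g ≠ h → p g < p h) (hrmax : ∀ g, g ≠ h → p g ≤ p r) {a : ι → G}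
    (ha : ∑ i, a i = (Fintype.card ι - 1) • h + r) :
    ∏ i, p (a i) ≤ p r * p h ^ (Fintype.card ι - 1) := by
  by_cases hspike : ∃ j, a = spike h r j
  · obtain ⟨j, rfl⟩ := hspike
    exact (prod_comp_spike p h r j).le
  · exact (prod_lt_of_forall_ne_spike hp hh hrmax ha (not_exists.1 hspike)).le

theorem filter_sum_eq_prod_eq_eq_image_spike [Nonempty ι] [Fintype G] [DecidableEq G]
    (hp : ∀ g, 0 < p g) (hh : ∀ g, g ≠ h → p g < p h) (hrmax : ∀ g, g ≠ h → p g ≤ p r) :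
    ({a | ∑ i, a i = (Fintype.card ι - 1) • h + r ∧
        ∏ i, p (a i) = p r * p h ^ (Fintype.card ι - 1)} : Finset (ι → G)) =
      univ.image (spike h r) := by
  ext a
  simp only [mem_filter, mem_univ, true_and, mem_image]
  constructor
  · rintro ⟨hsum, hprod⟩
    by_contra hspike
    exact (prod_lt_of_forall_ne_spike hp hh hrmax hsum fun j hj => hspike ⟨j, hj.symm⟩).ne hprod
  · rintro ⟨j, rfl⟩
    exact ⟨by rw [sum_spike, add_comm], prod_comp_spike p h r j⟩

end Spike

theorem tendsto_sum_div_pow_mul {ι : Type*} (S : Finset ι) {F : ι → ℝ} {c : ℝ} (hc : 0 < c)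
    (hF : ∀ a ∈ S, 0 ≤ F a ∧ F a ≤ c) (v : ι → ℝ) :
    Tendsto (fun k => ∑ a ∈ S, (F a / c) ^ k * v a) atTop (𝓝 (∑ a ∈ S with F a = c, v a)) := by
  classical
  rw [sum_filter]
  refine tendsto_finsetSum _ fun a ha => ?_
  by_cases haF : F a = c
  · simp [haF, hc.ne']
  · have hlt : F a / c < 1 := (div_lt_one hc).2 (lt_of_le_of_ne (hF a ha).2 haF)
    simpa [haF] using
      (tendsto_pow_atTop_nhds_zero_of_lt_one (div_nonneg (hF a ha).1 hc.le) hlt).mul_const (v a)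

theorem tendsto_sum_pow_mul_div_sum_pow_mul {ι : Type*} (S : Finset ι) {F : ι → ℝ} {c : ℝ}
    (hc : 0 < c) (hF : ∀ a ∈ S, 0 ≤ F a ∧ F a ≤ c) (f g : ι → ℝ)
    (hg : ∑ a ∈ S with F a = c, g a ≠ 0) :
    Tendsto (fun k => (∑ a ∈ S, F a ^ k * f a) / ∑ a ∈ S, F a ^ k * g a) atTop
      (𝓝 ((∑ a ∈ S with F a = c, f a) / ∑ a ∈ S with F a = c, g a)) := by
  have hscale (v : ι → ℝ) (k : ℕ) :
      ∑ a ∈ S, F a ^ k * v a = c ^ k * ∑ a ∈ S, (F a / c) ^ k * v a := by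
    rw [mul_sum]
    exact sum_congr rfl fun a _ => by rw [div_pow]; field_simp
  simp_rw [hscale, mul_div_mul_left _ _ (pow_pos hc _).ne']
  exact (tendsto_sum_div_pow_mul S hc hF f).div (tendsto_sum_div_pow_mul S hc hF g) hg

section Bernoulli

open Fin.NatCast

variable {G : Type*} [AddCommGroup G] [Fintype G] [DecidableEq G] [MeasurableSpace G]
  [MeasurableSingletonClass G] {p : G → ℝ} {ℙ : Measure (ℕ → G)} {h r : G} {N : ℕ} [NeZero N]

theorem tendsto_constCylinderMass_div (hp : ∀ g, 0 < p g) (hh : ∀ g, g ≠ h → p g < p h)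
    (hr : r ≠ h) (hrmax : ∀ g, g ≠ h → p g ≤ p r)
    (hbern : ∀ (n : ℕ) (w : ℕ → G),
      ℙ {ω | ∀ i < n, ω i = w i} = ENNReal.ofReal (∏ i ∈ range n, p (w i)))
    (t t' : ℕ) :
    Tendsto (fun k => constCylinderMass ℙ N ((N - 1) • h + r) (k * N + t' + 1) /
        constCylinderMass ℙ N ((N - 1) • h + r) (k * N + t + 1)) atTop
      (𝓝 ((∑ j : Fin N, ∏ i ∈ range t', p (spike h r j i)) /
        ∑ j : Fin N, ∏ i ∈ range t, p (spike h r j i))) := by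
  set S : Finset (Fin N → G) := {a | ∑ x, a x = (N - 1) • h + r}
  set F : (Fin N → G) → ℝ := fun a => ∏ x, p (a x)
  set c := p r * p h ^ (N - 1)
  have hmass (k u : ℕ) : constCylinderMass ℙ N ((N - 1) • h + r) (k * N + u + 1) =
      ∑ a ∈ S, F a ^ (k + 1) * ∏ i ∈ range u, p (a i) := by
    rw [constCylinderMass_succ (fun g => (hp g).le) hbern,
      show k * N + u + N = (k + 1) * N + u by ring]
    exact sum_congr rfl fun a _ => Fin.prod_range_mul_add (fun x => p (a x)) _ _
  have hF : ∀ a ∈ S, 0 ≤ F a ∧ F a ≤ c := fun a ha =>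
    ⟨prod_nonneg fun _ _ => (hp _).le,
      by simpa using prod_le_of_sum_eq (ι := Fin N) hp hh hrmax (by simpa [S] using ha)⟩
  have hmax : {a ∈ S | F a = c} = univ.image (spike h r) := by
    rw [filter_filter]
    simpa using filter_sum_eq_prod_eq_eq_image_spike (ι := Fin N) hp hh hrmax
  have hsum (u : ℕ) : ∑ a ∈ S with F a = c, ∏ i ∈ range u, p (a i) =
      ∑ j : Fin N, ∏ i ∈ range u, p (spike h r j i) := by
    rw [hmax, sum_image fun j _ k _ hjk => spike_injective hr hjk]
  simp_rw [hmass, ← hsum]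
  have hc : 0 < c := mul_pos (hp r) (pow_pos (hp h) _)
  refine (tendsto_sum_pow_mul_div_sum_pow_mul S hc hF _ _ ?_).comp (tendsto_add_atTop_nat 1)
  rw [hsum]
  exact (sum_pos (fun j _ => prod_pos fun i _ => hp _) univ_nonempty).ne'

theorem tendsto_constCylinderMass_div_mul_add_one (hp : ∀ g, 0 < p g)
    (hh : ∀ g, g ≠ h → p g < p h) (hr : r ≠ h) (hrmax : ∀ g, g ≠ h → p g ≤ p r)
    (hbern : ∀ (n : ℕ) (w : ℕ → G),
      ℙ {ω | ∀ i < n, ω i = w i} = ENNReal.ofReal (∏ i ∈ range n, p (w i))) :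
    Tendsto (fun k => constCylinderMass ℙ N ((N - 1) • h + r) (k * N + 1 + 1) /
        constCylinderMass ℙ N ((N - 1) • h + r) (k * N + 1)) atTop
      (𝓝 ((p r + ((N : ℝ) - 1) * p h) / N)) := by
  have hval : (∑ j : Fin N, ∏ i ∈ range 1, p (spike h r j i)) /
      ∑ j : Fin N, ∏ i ∈ range 0, p (spike h r j i) = (p r + ((N : ℝ) - 1) * p h) / N := by
    simp only [prod_range_one, prod_range_zero, Nat.cast_zero, sum_const, card_univ,
      Fintype.card_fin, nsmul_eq_mul, mul_one]
    rw [sum_congr rfl fun j _ => congrArg p (spike_apply_comm h r 0 j), sum_comp_spike p,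
      Fintype.card_fin, nsmul_eq_mul, Nat.cast_pred (NeZero.pos N)]
  simpa only [add_zero, hval] using
    tendsto_constCylinderMass_div (N := N) hp hh hr hrmax hbern 0 1

theorem tendsto_constCylinderMass_div_succ_mul (hp : ∀ g, 0 < p g)
    (hh : ∀ g, g ≠ h → p g < p h) (hr : r ≠ h) (hrmax : ∀ g, g ≠ h → p g ≤ p r)
    (hbern : ∀ (n : ℕ) (w : ℕ → G),
      ℙ {ω | ∀ i < n, ω i = w i} = ENNReal.ofReal (∏ i ∈ range n, p (w i))) :
    Tendsto (fun k => constCylinderMass ℙ N ((N - 1) • h + r) ((k + 1) * N + 1) /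
        constCylinderMass ℙ N ((N - 1) • h + r) ((k + 1) * N)) atTop
      (𝓝 (N * p h * p r / ((N - 1) * p r + p h))) := by
  have hprod (j : Fin N) : ∏ i ∈ range (N - 1), p (spike h r j i) =
      p r * p h ^ (N - 1) / p (spike h r ((N - 1 : ℕ) : Fin N) j) := by
    rw [eq_div_iff (hp _).ne', spike_apply_comm,
      ← prod_range_succ (fun i : ℕ => p (spike h r j i)), Nat.sub_add_cancel (NeZero.pos N),
      Fin.prod_range_natCast (fun x => p (spike h r j x)), prod_comp_spike, Fintype.card_fin]
  have hval : (∑ j : Fin N, ∏ i ∈ range N, p (spike h r j i)) /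
      ∑ j : Fin N, ∏ i ∈ range (N - 1), p (spike h r j i) =
      N * p h * p r / ((N - 1) * p r + p h) := by
    have hpN : ((N - 1 : ℕ) : ℝ) = N - 1 := Nat.cast_pred (NeZero.pos N)
    have hph := hp h
    have hpr := hp r
    rw [sum_congr rfl fun j _ => Fin.prod_range_natCast fun x => p (spike h r j x)]
    simp_rw [prod_comp_spike, hprod, div_eq_mul_inv (p r * _), ← mul_sum]
    rw [sum_comp_spike fun g => (p g)⁻¹]
    simp only [sum_const, card_univ, Fintype.card_fin, nsmul_eq_mul, hpN]
    field_simp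
    ring
  have hidx (k : ℕ) : (k + 1) * N = k * N + (N - 1) + 1 := by
    rw [add_assoc, Nat.sub_add_cancel (NeZero.pos N), add_mul, one_mul]
  have := tendsto_constCylinderMass_div (N := N) hp hh hr hrmax hbern (N - 1) N
  rw [hval] at this
  simpa only [hidx, add_assoc, Nat.sub_add_cancel (NeZero.pos N)] using this

end Bernoulli

/-- The cross-multiplied difference of the two sides is `(n - 1) * (x - y) ^ 2`. -/
theorem arithMean_ne_harmMean_of_ne {x y n : ℝ} (hx : 0 < x) (hy : 0 < y) (hxy : y ≠ x)
    (hn : 1 < n) : (y + (n - 1) * x) / n ≠ n * x * y / ((n - 1) * y + x) := by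
  rw [Ne, div_eq_div_iff (by linarith) (by nlinarith)]
  nlinarith [mul_pos (sub_pos.2 hn) (pow_pos (abs_pos.2 (sub_ne_zero.2 hxy)) 2), sq_abs (y - x)]

theorem windowSum_conditional_nonconvergence_general {G : Type*} [AddCommGroup G] [Fintype G]
    [MeasurableSpace G] [MeasurableSingletonClass G]
    (p : G → ℝ) (hp : ∀ g, p g ∈ Set.Ioo (0 : ℝ) 1)
    (h r : G) (hh : ∀ g, g ≠ h → p g < p h) (hr : r ≠ h)
    (hrmax : ∀ g, g ≠ h → p g ≤ p r)
    (ℙ : Measure (ℕ → G))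
    (hbern : ∀ (n : ℕ) (w : ℕ → G),
      ℙ {ω | ∀ i < n, ω i = w i} = ENNReal.ofReal (∏ i ∈ Finset.range n, p (w i)))
    (N : ℕ) (hN : 2 ≤ N)
    (s : G) (hs : s = (N - 1) • h + r)
    (ratio : ℕ → ℝ)
    (hratio : ∀ n, ratio n =
      (ℙ.map (windowSum N) {ω | ∀ i < n + 1, ω i = s}).toReal /
        (ℙ.map (windowSum N) {ω | ∀ i < n, ω i = s}).toReal) :
    Tendsto (fun k => ratio (k * N + 1)) atTop
        (𝓝 ((p r + ((N : ℝ) - 1) * p h) / N)) ∧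
    Tendsto (fun k => ratio ((k + 1) * N)) atTop
        (𝓝 ((N : ℝ) * p h * p r / (((N : ℝ) - 1) * p r + p h))) ∧
    (p r + ((N : ℝ) - 1) * p h) / N ≠ (N : ℝ) * p h * p r / (((N : ℝ) - 1) * p r + p h) ∧
    ¬ ∃ L : ℝ, Tendsto ratio atTop (𝓝 L) := by
  classical
  have : NeZero N := ⟨by omega⟩
  have hpos (g : G) : 0 < p g := (hp g).1
  have hratio' (n : ℕ) :
      ratio n = constCylinderMass ℙ N s (n + 1) / constCylinderMass ℙ N s n := hratio n
  subst hs
  have hA : Tendsto (fun k => ratio (k * N + 1)) atTop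
      (𝓝 ((p r + ((N : ℝ) - 1) * p h) / N)) := by
    simpa only [hratio'] using tendsto_constCylinderMass_div_mul_add_one hpos hh hr hrmax hbern
  have hB : Tendsto (fun k => ratio ((k + 1) * N)) atTop
      (𝓝 ((N : ℝ) * p h * p r / (((N : ℝ) - 1) * p r + p h))) := by
    simpa only [hratio'] using tendsto_constCylinderMass_div_succ_mul hpos hh hr hrmax hbern
  have hne := arithMean_ne_harmMean_of_ne (hpos h) (hpos r) (hh r hr).ne
    (by exact_mod_cast hN : (1 : ℝ) < N)
  refine ⟨hA, hB, hne, fun ⟨L, hL⟩ => hne ?_⟩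
  have hsubA : Tendsto (fun k => k * N + 1) atTop atTop :=
    tendsto_atTop_mono (fun k => Nat.le_succ_of_le (Nat.le_mul_of_pos_right k (by omega)))
      tendsto_id
  have hsubB : Tendsto (fun k => (k + 1) * N) atTop atTop :=
    tendsto_atTop_mono (fun k => (Nat.le_succ k).trans (Nat.le_mul_of_pos_right _ (by omega)))
      tendsto_id
  exact (tendsto_nhds_unique (hL.comp hsubA) hA).symm.trans
    (tendsto_nhds_unique (hL.comp hsubB) hB)

/-- nonconvergence of `ℙ₀([s^{n+1}] | [s^n])` for `s = (N−1)·h + r`,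
where `h` is the unique maximizer of `p` and `r` maximizes `p` on `G ∖ {h}`:
the conditional probabilities converge along `n + N − 1 ≡ 0 (mod N)` to
`(p_r + (N−1)p_h)/N`, along `n + N − 1 ≡ N−1 (mod N)` to `N p_h p_r /((N−1)p_r + p_h)`,
these two values are distinct, and the full limit does not exist. -/
theorem windowSum_conditional_nonconvergence {G : Type*} [AddCommGroup G] [Fintype G]
    [MeasurableSpace G] [MeasurableSingletonClass G]
    (p : G → ℝ) (hp : ∀ g, p g ∈ Set.Ioo (0 : ℝ) 1) (hsum : ∑ g, p g = 1)
    (h r : G) (hh : ∀ g, g ≠ h → p g < p h) (hr : r ≠ h)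
    (hrmax : ∀ g, g ≠ h → p g ≤ p r)
    (ℙ : Measure (ℕ → G)) [IsProbabilityMeasure ℙ]
    (hbern : ∀ (n : ℕ) (w : ℕ → G),
      ℙ {ω | ∀ i < n, ω i = w i} = ENNReal.ofReal (∏ i ∈ Finset.range n, p (w i)))
    (N : ℕ) (hN : 2 ≤ N)
    (s : G) (hs : s = (N - 1) • h + r)
    (ratio : ℕ → ℝ)
    (hratio : ∀ n, ratio n =
      (ℙ.map (windowSum N) {ω | ∀ i < n + 1, ω i = s}).toReal /
        (ℙ.map (windowSum N) {ω | ∀ i < n, ω i = s}).toReal) :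
    Tendsto (fun k => ratio (k * N + 1)) atTop
        (𝓝 ((p r + ((N : ℝ) - 1) * p h) / N)) ∧
    Tendsto (fun k => ratio ((k + 1) * N)) atTop
        (𝓝 ((N : ℝ) * p h * p r / (((N : ℝ) - 1) * p r + p h))) ∧
    (p r + ((N : ℝ) - 1) * p h) / N ≠ (N : ℝ) * p h * p r / (((N : ℝ) - 1) * p r + p h) ∧
    ¬ ∃ L : ℝ, Tendsto ratio atTop (𝓝 L) :=
  windowSum_conditional_nonconvergence_general p hp h r hh hr hrmax ℙ hbern N hN s hs ratio hratio
end

section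
/- Let ℙ be the Bernoulli measure on Ω = (ℕ₊)^ℕ with marginals ℙ{ω_0 = a} = 2^{-a}. For fixed b_0,...,b_{n-1} ∈ {0,1}, let D = {ω : θ(ω_j, ω_{j+1}) = b_j for 0 ≤ j < n} where θ(a₁,a₂) = 1 iff a₂ = a₁+1. Then for all integers 1 ≤ r < k ≤ s: ℙ({ω_0 = s} ∩ D) ≤ ℙ({ω_0 = r} ∩ D) + ℙ({ω_0 = k} ∩ D). -/
open MeasureTheory
open scoped BigOperators

instance : MeasurableSpace ℕ+ := ⊤

instance : MeasurableSingletonClass ℕ+ :=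
  ⟨fun _ => MeasurableSpace.measurableSet_top⟩

/-- `θ(a₁, a₂) = 1` iff `a₂ = a₁ + 1`. -/
def theta (a₁ a₂ : ℕ+) : Bool := a₂ = a₁ + 1

/-! Write `p_m(b, a) = ℙ(ω₀ = a, D)` for the pattern `b` of length `m`. Conditioning on `ω₁`
gives `p_{m+1}(b, a) = 2^{-a} ∑_{c : θ(a,c) = b₀} p_m(b', c)` with `b'` the shifted pattern, and
the inequality follows by induction on `m`. If `b₀ = 1` the sum is the single term
`p_m(b', a+1)`, so the inequality for `s, r, k` follows from the one for `s+1, r+1, k+1` because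
`2^{-s} ≤ 2^{-r}, 2^{-k}`. If `b₀ = 0` the sum omits only `c = a+1`, so the left side is at most
`2^{-k} ∑_c p_m(b', c) = 2^{-k} p_m(b', k+1) + p_{m+1}(b, k)`, and `2^{-k} p_m(b', k+1)` is at
most `p_{m+1}(b, r)` since `k+1 ≠ r+1`. -/

open scoped ENNReal

namespace BernoulliPattern

theorem tsum_fin_cons {α : Type*} {m : ℕ} (F : (Fin (m + 1) → α) → ℝ≥0∞) :
    ∑' u, F u = ∑' c, ∑' v, F (Fin.cons c v) := by
  rw [← (Fin.consEquiv fun _ => α).tsum_eq, ENNReal.tsum_prod']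
  rfl

theorem tsum_ite_head_eq {α : Type*} [DecidableEq α] {m : ℕ} (F : (Fin (m + 1) → α) → ℝ≥0∞)
    (a : α) : ∑' u, (if u 0 = a then F u else 0) = ∑' v, F (Fin.cons a v) := by
  rw [tsum_fin_cons, tsum_eq_single a fun c hc => by simp [hc]]
  simp

theorem inv_two_pow_le_inv_two_pow {x y : ℕ+} (h : x ≤ y) :
    (2 : ℝ≥0∞)⁻¹ ^ (y : ℕ) ≤ 2⁻¹ ^ (x : ℕ) :=
  pow_le_pow_right_of_le_one' (ENNReal.inv_le_one.2 ENNReal.one_lt_two.le) (by exact_mod_cast h)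

noncomputable def weight {N : ℕ} (u : Fin N → ℕ+) : ℝ≥0∞ := ∏ i, 2⁻¹ ^ (u i : ℕ)

theorem weight_cons {N : ℕ} (a : ℕ+) (v : Fin N → ℕ+) :
    weight (Fin.cons a v : Fin (N + 1) → ℕ+) = 2⁻¹ ^ (a : ℕ) * weight v :=
  Fin.prod_univ_succ _

def Admissible {m : ℕ} (b : ℕ → Bool) (u : Fin (m + 1) → ℕ+) : Prop :=
  ∀ j : Fin m, theta (u j.castSucc) (u j.succ) = b j

instance {m : ℕ} (b : ℕ → Bool) : DecidablePred (Admissible (m := m) b) :=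
  fun _ => Fintype.decidableForallFintype

theorem admissible_cons_cons {m : ℕ} (b : ℕ → Bool) (a c : ℕ+) (v : Fin m → ℕ+) :
    Admissible b (Fin.cons a (Fin.cons c v) : Fin (m + 2) → ℕ+) ↔
      theta a c = b 0 ∧ Admissible (fun i => b (i + 1)) (Fin.cons c v : Fin (m + 1) → ℕ+) := by
  simp [Admissible, Fin.forall_fin_succ]

noncomputable def patternMass (m : ℕ) (b : ℕ → Bool) (a : ℕ+) : ℝ≥0∞ :=
  2⁻¹ ^ (a : ℕ) * ∑' v : Fin m → ℕ+, if Admissible b (Fin.cons a v) then weight v else 0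

theorem patternMass_zero (b : ℕ → Bool) (a : ℕ+) : patternMass 0 b a = 2⁻¹ ^ (a : ℕ) := by
  simp [patternMass, Admissible, weight]

theorem patternMass_succ (m : ℕ) (b : ℕ → Bool) (a : ℕ+) :
    patternMass (m + 1) b a =
      2⁻¹ ^ (a : ℕ) *
        ∑' c, if theta a c = b 0 then patternMass m (fun i => b (i + 1)) c else 0 := by
  simp only [patternMass]
  rw [tsum_fin_cons]
  simp only [admissible_cons_cons, weight_cons, ite_and, ← ENNReal.tsum_mul_left, mul_ite,
    mul_zero]
  exact tsum_congr fun c => by split_ifs <;> simp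

theorem tsum_theta_true (M : ℕ+ → ℝ≥0∞) (a : ℕ+) :
    ∑' c, (if theta a c = true then M c else 0) = M (a + 1) := by
  simp [theta]

theorem tsum_theta_false_le_tsum (M : ℕ+ → ℝ≥0∞) (a : ℕ+) :
    ∑' c, (if theta a c = false then M c else 0) ≤ ∑' c, M c :=
  ENNReal.tsum_le_tsum fun c => by split_ifs <;> simp

theorem tsum_eq_add_tsum_theta_false (M : ℕ+ → ℝ≥0∞) (a : ℕ+) :
    ∑' c, M c = M (a + 1) + ∑' c, (if theta a c = false then M c else 0) := by
  rw [ENNReal.tsum_eq_add_tsum_ite (a + 1)]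
  congr 1
  exact tsum_congr fun c => by by_cases h : c = a + 1 <;> simp [theta, h]

theorem le_tsum_theta_false (M : ℕ+ → ℝ≥0∞) {a c : ℕ+} (h : a ≠ c) :
    M (c + 1) ≤ ∑' x, (if theta a x = false then M x else 0) :=
  calc M (c + 1) = if theta a (c + 1) = false then M (c + 1) else 0 := by simp [theta, h.symm]
    _ ≤ _ := ENNReal.le_tsum (c + 1)

theorem inv_two_pow_mul_apply_succ_le_add (M : ℕ+ → ℝ≥0∞) {r k s : ℕ+} (hrk : r < k)
    (hks : k ≤ s) (hM : M (s + 1) ≤ M (r + 1) + M (k + 1)) :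
    2⁻¹ ^ (s : ℕ) * M (s + 1) ≤ 2⁻¹ ^ (r : ℕ) * M (r + 1) + 2⁻¹ ^ (k : ℕ) * M (k + 1) :=
  calc 2⁻¹ ^ (s : ℕ) * M (s + 1)
      ≤ 2⁻¹ ^ (s : ℕ) * M (r + 1) + 2⁻¹ ^ (s : ℕ) * M (k + 1) := by
        rw [← mul_add]; gcongr
    _ ≤ 2⁻¹ ^ (r : ℕ) * M (r + 1) + 2⁻¹ ^ (k : ℕ) * M (k + 1) :=
        add_le_add (mul_le_mul' (inv_two_pow_le_inv_two_pow (hrk.le.trans hks)) le_rfl)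
          (mul_le_mul' (inv_two_pow_le_inv_two_pow hks) le_rfl)

theorem inv_two_pow_mul_tsum_theta_false_le_add (M : ℕ+ → ℝ≥0∞) {r k s : ℕ+} (hrk : r < k)
    (hks : k ≤ s) :
    2⁻¹ ^ (s : ℕ) * ∑' c, (if theta s c = false then M c else 0) ≤
      2⁻¹ ^ (r : ℕ) * ∑' c, (if theta r c = false then M c else 0) +
        2⁻¹ ^ (k : ℕ) * ∑' c, (if theta k c = false then M c else 0) :=
  calc 2⁻¹ ^ (s : ℕ) * ∑' c, (if theta s c = false then M c else 0)
      ≤ 2⁻¹ ^ (k : ℕ) * ∑' c, M c :=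
        mul_le_mul' (inv_two_pow_le_inv_two_pow hks) (tsum_theta_false_le_tsum M s)
    _ = 2⁻¹ ^ (k : ℕ) * M (k + 1) +
          2⁻¹ ^ (k : ℕ) * ∑' c, (if theta k c = false then M c else 0) := by
        rw [tsum_eq_add_tsum_theta_false M k, mul_add]
    _ ≤ _ := add_le_add
        (mul_le_mul' (inv_two_pow_le_inv_two_pow hrk.le) (le_tsum_theta_false M hrk.ne)) le_rfl

theorem patternMass_le_add (m : ℕ) (b : ℕ → Bool) {r k s : ℕ+} (hrk : r < k) (hks : k ≤ s) :
    patternMass m b s ≤ patternMass m b r + patternMass m b k := by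
  induction m generalizing b r k s with
  | zero =>
    simp only [patternMass_zero]
    exact (inv_two_pow_le_inv_two_pow hks).trans le_add_self
  | succ m ih =>
    simp only [patternMass_succ]
    cases b 0
    · exact inv_two_pow_mul_tsum_theta_false_le_add _ hrk hks
    · simp only [tsum_theta_true]
      exact inv_two_pow_mul_apply_succ_le_add _ hrk hks
        (ih _ (by simpa using hrk) (by simpa using hks))

section Measure

variable {ℙ : Measure (ℕ → ℕ+)}
  (hbern : ∀ (n : ℕ) (w : ℕ → ℕ+),
    ℙ {ω | ∀ i < n, ω i = w i} = ∏ i ∈ Finset.range n, (2 : ENNReal)⁻¹ ^ (w i : ℕ))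
include hbern

theorem measure_cylinder {N : ℕ} (u : Fin N → ℕ+) :
    ℙ {ω | ∀ i : Fin N, ω i = u i} = weight u := by
  set w : ℕ → ℕ+ := fun i => if h : i < N then u ⟨i, h⟩ else 1
  have hset : {ω : ℕ → ℕ+ | ∀ i : Fin N, ω i = u i} = {ω | ∀ i < N, ω i = w i} := by
    ext ω
    simp only [Set.mem_ofPred_eq, Fin.forall_iff]
    exact forall₂_congr fun i hi => by simp [w, hi]
  rw [hset, hbern, ← Fin.prod_univ_eq_prod_range]
  simp [w, weight]

theorem measure_preimage_init {N : ℕ} (A : Set (Fin N → ℕ+)) :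
    ℙ ((fun ω (i : Fin N) => ω i) ⁻¹' A) = ∑' u, A.indicator weight u := by
  have hmeas : Measurable fun (ω : ℕ → ℕ+) (i : Fin N) => ω i :=
    measurable_pi_lambda _ fun i => measurable_pi_apply _
  rw [← Measure.map_apply hmeas A.to_countable.measurableSet,
    ← Measure.tsum_indicator_apply_singleton _ _ A.to_countable.measurableSet]
  have hsingleton : ∀ u, ℙ.map (fun ω (i : Fin N) => ω i) {u} = weight u := fun u => by
    rw [Measure.map_apply hmeas (measurableSet_singleton u), ← measure_cylinder hbern]
    congr 1
    ext ω
    simp [funext_iff]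
  simp only [hsingleton]

theorem measure_head_inter_pattern (m : ℕ) (b : ℕ → Bool) (a : ℕ+) :
    ℙ ({ω | ω 0 = a} ∩ {ω | ∀ j < m, theta (ω j) (ω (j + 1)) = b j}) = patternMass m b a := by
  have hset : {ω : ℕ → ℕ+ | ω 0 = a} ∩ {ω | ∀ j < m, theta (ω j) (ω (j + 1)) = b j} =
      (fun ω (i : Fin (m + 1)) => ω i) ⁻¹' {u | u 0 = a ∧ Admissible b u} := by
    ext ω
    simp [Admissible, Fin.forall_iff]
  rw [hset, measure_preimage_init hbern]
  simp only [Set.indicator_apply, Set.mem_ofPred_eq, ite_and]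
  rw [tsum_ite_head_eq]
  simp only [weight_cons, patternMass, ← ENNReal.tsum_mul_left, mul_ite, mul_zero]

end Measure

end BernoulliPattern

theorem bernoulli_increment_inequality_general
    (ℙ : Measure (ℕ → ℕ+))
    (hbern : ∀ (n : ℕ) (w : ℕ → ℕ+),
      ℙ {ω | ∀ i < n, ω i = w i} = ∏ i ∈ Finset.range n, (2 : ENNReal)⁻¹ ^ (w i : ℕ))
    (n : ℕ) (b : ℕ → Bool)
    (D : Set (ℕ → ℕ+)) (hD : D = {ω | ∀ j < n, theta (ω j) (ω (j + 1)) = b j})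
    (r k s : ℕ+) (hrk : r < k) (hks : k ≤ s) :
    ℙ ({ω | ω 0 = s} ∩ D) ≤ ℙ ({ω | ω 0 = r} ∩ D) + ℙ ({ω | ω 0 = k} ∩ D) := by
  subst hD
  simp only [BernoulliPattern.measure_head_inter_pattern hbern]
  exact BernoulliPattern.patternMass_le_add n b hrk hks

/-- for the Bernoulli measure `ℙ` on `(ℕ₊)^ℕ` with marginals `2^{-a}`,
the event `D = {ω : θ(ω_j, ω_{j+1}) = b_j for j < n}`, and integers `1 ≤ r < k ≤ s`:
`ℙ({ω_0 = s} ∩ D) ≤ ℙ({ω_0 = r} ∩ D) + ℙ({ω_0 = k} ∩ D)`. -/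
theorem bernoulli_increment_inequality
    (ℙ : Measure (ℕ → ℕ+)) [IsProbabilityMeasure ℙ]
    (hbern : ∀ (n : ℕ) (w : ℕ → ℕ+),
      ℙ {ω | ∀ i < n, ω i = w i} = ∏ i ∈ Finset.range n, (2 : ENNReal)⁻¹ ^ (w i : ℕ))
    (n : ℕ) (b : ℕ → Bool)
    (D : Set (ℕ → ℕ+)) (hD : D = {ω | ∀ j < n, theta (ω j) (ω (j + 1)) = b j})
    (r k s : ℕ+) (hrk : r < k) (hks : k ≤ s) :
    ℙ ({ω | ω 0 = s} ∩ D) ≤ ℙ ({ω | ω 0 = r} ∩ D) + ℙ ({ω | ω 0 = k} ∩ D) :=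
  bernoulli_increment_inequality_general ℙ hbern n b D hD r k s hrk hks
end

section
/- With ℙ the Bernoulli measure on (ℕ₊)^ℕ with marginals 2^{-a} and ℙ₀ = ℙ∘Θ^{-1} where (Θω)_j = 1 iff ω_{j+1} = ω_j + 1: for every n ≥ 1, ℙ₀[1^n]₀ = 2^{-n(n+1)/2} · 2^{-(n+1)} / (1 − 2^{-(n+1)}), where [1^n]₀ is the cylinder of n consecutive 1's in {0,1}^ℕ. -/
open MeasureTheory
open scoped BigOperators

/-- `(Θω)_j = θ(ω_j, ω_{j+1})`. -/
def Theta (ω : ℕ → ℕ+) : ℕ → Bool := fun j => theta (ω j) (ω (j + 1))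

/-!
`Θω` starts with `n` ones exactly when `ω` starts with a run `k, k+1, …, k+n` of consecutive
integers, and these runs are disjoint events indexed by `k = ω₀ ≥ 1`. The run starting at `k`
has probability `2^{-(k + (k+1) + ⋯ + (k+n))} = 2^{-n(n+1)/2} · (2^{-(n+1)})^k`, and summing the
geometric series over `k ≥ 1` gives the formula.
-/

lemma measurableSet_setOf_forall_lt_eq_s14 {α : Type*} [MeasurableSpace α]
    [MeasurableSingletonClass α] (n : ℕ) (w : ℕ → α) :
    MeasurableSet {ω : ℕ → α | ∀ i < n, ω i = w i} := by
  have : {ω : ℕ → α | ∀ i < n, ω i = w i} = ⋂ i ∈ Finset.range n, (fun ω => ω i) ⁻¹' {w i} := by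
    ext ω; simp
  rw [this]
  exact .biInter (Finset.range n).countable_toSet
    fun i _ => measurable_pi_apply i (measurableSet_singleton _)

lemma measurable_Theta : Measurable Theta :=
  measurable_pi_lambda _ fun j =>
    (measurable_of_countable (Function.uncurry theta)).comp
      (f := fun ω : ℕ → ℕ+ => (ω j, ω (j + 1)))
      ((measurable_pi_apply j).prodMk (measurable_pi_apply (j + 1)))

lemma forall_lt_succ_eq_iterate_iff {α : Type*} (f : α → α) (ω : ℕ → α) (n : ℕ) :
    (∀ j < n + 1, ω j = f^[j] (ω 0)) ↔ ∀ j < n, ω (j + 1) = f (ω j) := by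
  constructor
  · intro h j hj
    rw [h (j + 1) (by omega), Function.iterate_succ_apply', ← h j (by omega)]
  · intro h j hj
    induction j with
    | zero => rfl
    | succ j ih => rw [h j (by omega), ih (by omega), Function.iterate_succ_apply']

lemma pairwise_disjoint_setOf_forall_lt_succ_eq_iterate {α : Type*} (f : α → α) (n : ℕ) :
    Pairwise (Function.onFun Disjoint fun a : α => {ω : ℕ → α | ∀ j < n + 1, ω j = f^[j] a}) :=
  fun a b hab => Set.disjoint_left.mpr fun ω ha hb =>
    hab <| by simpa using (ha 0 n.succ_pos).symm.trans (hb 0 n.succ_pos)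

lemma Theta_preimage_setOf_forall_lt_eq_true (n : ℕ) :
    Theta ⁻¹' {γ | ∀ j < n, γ j = true} =
      ⋃ k : ℕ+, {ω : ℕ → ℕ+ | ∀ j < n + 1, ω j = (· + 1)^[j] k} := by
  ext ω
  simp only [Set.mem_preimage, Set.mem_ofPred_eq, Set.mem_iUnion, Theta, theta,
    decide_eq_true_eq]
  refine ⟨fun h => ⟨ω 0, (forall_lt_succ_eq_iterate_iff _ ω n).mpr h⟩, ?_⟩
  rintro ⟨k, hk⟩
  obtain rfl : ω 0 = k := hk 0 n.succ_pos
  exact (forall_lt_succ_eq_iterate_iff _ ω n).mp hk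

lemma PNat.coe_iterate_add_one (k : ℕ+) (j : ℕ) : (((· + 1)^[j] k : ℕ+) : ℕ) = k + j := by
  induction j with
  | zero => rfl
  | succ j ih => rw [Function.iterate_succ_apply', PNat.add_coe, ih, PNat.one_coe, add_assoc]

lemma sum_range_succ_iterate_add_one (k : ℕ+) (n : ℕ) :
    ∑ j ∈ Finset.range (n + 1), (((· + 1)^[j] k : ℕ+) : ℕ) = n * (n + 1) / 2 + (n + 1) * k := by
  simp only [PNat.coe_iterate_add_one]
  rw [Finset.sum_add_distrib, Finset.sum_const, Finset.card_range, smul_eq_mul,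
    Finset.sum_range_id, Nat.add_sub_cancel, mul_comm n, add_comm]

lemma ENNReal.tsum_pnat_pow (r : ENNReal) : ∑' k : ℕ+, r ^ (k : ℕ) = r * (1 - r)⁻¹ := by
  simp_rw [tsum_pnat_eq_tsum_succ (f := fun k => r ^ k), pow_succ', ENNReal.tsum_mul_left,
    ENNReal.tsum_geometric]

theorem Theta_pushforward_ones_cylinder_general
    (ℙ : Measure (ℕ → ℕ+))
    (hbern : ∀ (n : ℕ) (w : ℕ → ℕ+),
      ℙ {ω | ∀ i < n, ω i = w i} = ∏ i ∈ Finset.range n, (2 : ENNReal)⁻¹ ^ (w i : ℕ))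
    (n : ℕ) :
    ℙ.map Theta {γ | ∀ j < n, γ j = true} =
      (2 : ENNReal)⁻¹ ^ (n * (n + 1) / 2) * (2 : ENNReal)⁻¹ ^ (n + 1) /
        (1 - (2 : ENNReal)⁻¹ ^ (n + 1)) := by
  have hrun (k : ℕ+) : ℙ {ω | ∀ j < n + 1, ω j = (· + 1)^[j] k} =
      (2 : ENNReal)⁻¹ ^ (n * (n + 1) / 2) * ((2 : ENNReal)⁻¹ ^ (n + 1)) ^ (k : ℕ) := by
    rw [hbern, Finset.prod_pow_eq_pow_sum, sum_range_succ_iterate_add_one, pow_add, pow_mul]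
  rw [Measure.map_apply measurable_Theta (measurableSet_setOf_forall_lt_eq_s14 n fun _ => true),
    Theta_preimage_setOf_forall_lt_eq_true,
    measure_iUnion (pairwise_disjoint_setOf_forall_lt_succ_eq_iterate _ n)
      fun k => measurableSet_setOf_forall_lt_eq_s14 (n + 1) _]
  simp_rw [hrun, ENNReal.tsum_mul_left, ENNReal.tsum_pnat_pow, ENNReal.div_eq_inv_mul]
  ring

/-- with `ℙ₀ = ℙ∘Θ⁻¹` as above, for every `n ≥ 1`,
`ℙ₀[1^n]₀ = 2^{-n(n+1)/2} · 2^{-(n+1)} / (1 − 2^{-(n+1)})`. -/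
theorem Theta_pushforward_ones_cylinder
    (ℙ : Measure (ℕ → ℕ+)) [IsProbabilityMeasure ℙ]
    (hbern : ∀ (n : ℕ) (w : ℕ → ℕ+),
      ℙ {ω | ∀ i < n, ω i = w i} = ∏ i ∈ Finset.range n, (2 : ENNReal)⁻¹ ^ (w i : ℕ))
    (n : ℕ) (hn : 1 ≤ n) :
    ℙ.map Theta {γ | ∀ j < n, γ j = true} =
      (2 : ENNReal)⁻¹ ^ (n * (n + 1) / 2) * (2 : ENNReal)⁻¹ ^ (n + 1) /
        (1 - (2 : ENNReal)⁻¹ ^ (n + 1)) :=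
  Theta_pushforward_ones_cylinder_general ℙ hbern n
end

section
/- Let ℙ be a ψ-mixing shift-invariant probability measure on 𝒜^ℕ (with |𝒜| > 1 and ψ_m → 0) such that there is a constant Γ > 0 with ℙ[a_0,...,a_{n-1}] ≤ e^{-Γn} for all cylinders. Let ω be a periodic point with minimal period r in the support of ℙ, β_{ω,n} = ℙ(A_{n+r}^ω | A_n^ω), and suppose β_ω = lim_n β_{ω,n} exists. Then, with κ(r) = lcm_{1≤j≤ℓ} r/gcd(r,d_j) for fixed integers 1 ≤ d_1 < ... < d_ℓ, and ρ_{A_n^ω} = ∏_{j=1}^ℓ ℙ(R^{(n+d_jκ(r))/r} | A_n^ω) where R is the r-prefix cylinder of ω, the limit lim_n ρ_{A_n^ω} exists and equals β_ω^a with a = (κ(r)/r)∑_{i=1}^ℓ d_i. -/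
/-!
Since `κ(r)` is a multiple of `r / gcd(r, d_j)`, the shift `d_j κ(r)` is a multiple of `r`, namely
`k_j r` with `∑ k_j = a`. Each factor `ℙ(A_{n + k r}^ω) / ℙ(A_n^ω)` telescopes into the `k`
consecutive ratios `β_{ω, n + i r}`, `i < k`, and therefore tends to `β_ω ^ k`.
-/

open MeasureTheory Filter Topology

def shift {𝒜 : Type*} (ω : ℕ → 𝒜) : ℕ → 𝒜 := fun n => ω (n + 1)

theorem Nat.dvd_mul_div_gcd (r d : ℕ) : r ∣ d * (r / Nat.gcd r d) := by
  rw [← Nat.mul_div_assoc d (Nat.gcd_dvd_left r d), mul_comm, ← Nat.lcm_eq_mul_div]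
  exact Nat.dvd_lcm_left r d

theorem Nat.dvd_mul_lcm_div_gcd {ι : Type*} (s : Finset ι) (r : ℕ) (d : ι → ℕ) {j : ι}
    (hj : j ∈ s) : r ∣ d j * s.lcm fun i => r / Nat.gcd r (d i) :=
  (Nat.dvd_mul_div_gcd r (d j)).trans (mul_dvd_mul_left _ (Finset.dvd_lcm hj))

theorem tendsto_div_add_mul_of_tendsto_div_add {K : Type*} [GroupWithZero K] [TopologicalSpace K]
    [ContinuousMul K] {P : ℕ → K} {r : ℕ} {β : K} (hP : ∀ n, P n ≠ 0)
    (hβ : Tendsto (fun n => P (n + r) / P n) atTop (𝓝 β)) (k : ℕ) :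
    Tendsto (fun n => P (n + k * r) / P n) atTop (𝓝 (β ^ k)) := by
  induction k with
  | zero => simpa [div_self (hP _)] using tendsto_const_nhds
  | succ k ih =>
    have hstep : Tendsto (fun n => P (n + k * r + r) / P (n + k * r)) atTop (𝓝 β) :=
      hβ.comp (tendsto_add_atTop_nat (k * r))
    rw [pow_succ']
    refine (hstep.mul ih).congr fun n => ?_
    rw [div_mul_div_cancel₀ (hP _), add_assoc, ← Nat.succ_mul]

theorem tendsto_prod_div_add_of_dvd {K ι : Type*} [CommGroupWithZero K] [TopologicalSpace K]
    [ContinuousMul K] {P : ℕ → K} {r : ℕ} {β : K} (s : Finset ι) (m : ι → ℕ)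
    (hm : ∀ j ∈ s, r ∣ m j) (hP : ∀ n, P n ≠ 0) (hβ : Tendsto (fun n => P (n + r) / P n) atTop (𝓝 β)) :
    Tendsto (fun n => ∏ j ∈ s, P (n + m j) / P n) atTop (𝓝 (β ^ ∑ j ∈ s, m j / r)) := by
  rw [← Finset.prod_pow_eq_pow_sum]
  refine tendsto_finsetProd s fun j hj => ?_
  simpa only [Nat.div_mul_cancel (hm j hj)] using
    tendsto_div_add_mul_of_tendsto_div_add hP hβ (m j / r)

theorem rho_limit_eq_beta_pow_general {𝒜 : Type*}
    [MeasurableSpace 𝒜]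
    (ℙ : Measure (ℕ → 𝒜)) [IsProbabilityMeasure ℙ]
    (ω : ℕ → 𝒜) (r : ℕ)
    (hsupp : ∀ n, 0 < ℙ {γ | ∀ i < n, γ i = ω i})
    (ℓ : ℕ) (d : Fin ℓ → ℕ)
    (κ : ℕ) (hκ : κ = Finset.univ.lcm fun j : Fin ℓ => r / Nat.gcd r (d j))
    (a : ℕ) (ha : a = ∑ j : Fin ℓ, κ * d j / r)
    (β : ℝ)
    (hβ : Tendsto (fun n => (ℙ {γ | ∀ i < n + r, γ i = ω i}).toReal /
        (ℙ {γ | ∀ i < n, γ i = ω i}).toReal) atTop (𝓝 β)) :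
    Tendsto (fun n => ∏ j : Fin ℓ,
        (ℙ {γ | ∀ i < n + d j * κ, γ i = ω i}).toReal /
          (ℙ {γ | ∀ i < n, γ i = ω i}).toReal) atTop (𝓝 (β ^ a)) := by
  have hP : ∀ n, (ℙ {γ | ∀ i < n, γ i = ω i}).toReal ≠ 0 := fun n =>
    (ENNReal.toReal_pos (hsupp n).ne' (measure_ne_top ℙ _)).ne'
  have hdvd : ∀ j ∈ Finset.univ, r ∣ d j * κ := fun j hj =>
    hκ ▸ Nat.dvd_mul_lcm_div_gcd Finset.univ r d hj
  simpa only [ha, mul_comm κ] using tendsto_prod_div_add_of_dvd Finset.univ _ hdvd hP hβ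

/-- Lemma 1: for a ψ-mixing shift-invariant probability measure with
exponential decay of cylinders, a periodic point `ω` of minimal period `r` in the
support, and `β_ω = lim_n ℙ(A_{n+r}^ω | A_n^ω)`, the limit of
`ρ_{A_n^ω} = ∏_{j=1}^ℓ ℙ(A_{n+d_j κ(r)}^ω | A_n^ω)` exists and equals `β_ω^a`,
where `κ(r) = lcm_j (r / gcd(r, d_j))` and `a = (κ(r)/r) ∑_i d_i`. -/
theorem rho_limit_eq_beta_pow {𝒜 : Type*} [Countable 𝒜] [Nontrivial 𝒜]
    [MeasurableSpace 𝒜] [MeasurableSingletonClass 𝒜]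
    (ℙ : Measure (ℕ → 𝒜)) [IsProbabilityMeasure ℙ]
    (hinv : MeasurePreserving shift ℙ ℙ)
    (ψ : ℕ → ℝ) (hψ : Tendsto ψ atTop (𝓝 0))
    (hmix : ∀ (m n : ℕ) (E F : Set (ℕ → 𝒜)),
      MeasurableSet[MeasurableSpace.comap (fun ω (i : Fin n) => ω i) inferInstance] E →
      MeasurableSet F →
      |(ℙ (E ∩ (shift^[n + m]) ⁻¹' F)).toReal - (ℙ E).toReal * (ℙ F).toReal| ≤
        ψ m * (ℙ E).toReal * (ℙ F).toReal)
    (Γ : ℝ) (hΓ : 0 < Γ)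
    (hdecay : ∀ (n : ℕ) (w : ℕ → 𝒜),
      ℙ {γ | ∀ i < n, γ i = w i} ≤ ENNReal.ofReal (Real.exp (-Γ * n)))
    (ω : ℕ → 𝒜) (r : ℕ) (hr : 0 < r)
    (hper : ∀ i, ω (i + r) = ω i)
    (hmin : ∀ r', 0 < r' → r' < r → ∃ i, ω (i + r') ≠ ω i)
    (hsupp : ∀ n, 0 < ℙ {γ | ∀ i < n, γ i = ω i})
    (ℓ : ℕ) (hℓ : 0 < ℓ) (d : Fin ℓ → ℕ) (hd : StrictMono d) (hd1 : ∀ j, 1 ≤ d j)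
    (κ : ℕ) (hκ : κ = Finset.univ.lcm fun j : Fin ℓ => r / Nat.gcd r (d j))
    (a : ℕ) (ha : a = ∑ j : Fin ℓ, κ * d j / r)
    (β : ℝ)
    (hβ : Tendsto (fun n => (ℙ {γ | ∀ i < n + r, γ i = ω i}).toReal /
        (ℙ {γ | ∀ i < n, γ i = ω i}).toReal) atTop (𝓝 β)) :
    Tendsto (fun n => ∏ j : Fin ℓ,
        (ℙ {γ | ∀ i < n + d j * κ, γ i = ω i}).toReal /
          (ℙ {γ | ∀ i < n, γ i = ω i}).toReal) atTop (𝓝 (β ^ a)) :=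
  rho_limit_eq_beta_pow_general ℙ ω r hsupp ℓ d κ hκ a ha β hβ
end

section
/- Let Ω_S be a topologically mixing topological Markov shift with ℙ a T-invariant probability measure supported on Ω_S, and suppose the inverse Jacobian J = dℙ/d(ℙ∘T) has a continuous version on Ω_S. Let ω ∈ supp ℙ be periodic with minimal period r. Then lim_n ℙ(A_{n+r}^ω | A_n^ω) exists and equals ∏_{j=0}^{r-1} J(T^j ω). -/
open MeasureTheory Filter Topology
open scoped BigOperators

/-!
Write `[x]_n` for the cylinder of sequences agreeing with `x` on the first `n` symbols. Since
`ℙ∘T` restricted to `[x]_{n+1}` is the image of `ℙ` on `[Tx]_n`, the ratio `ℙ[x]_{n+1} / ℙ[Tx]_n`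
is the `(ℙ∘T)`-average of `J` over `[x]_{n+1}`. For `n ≥ 1` that cylinder fixes the first
transition, so it lies in `Ω_S` up to a `(ℙ∘T)`-null set, and the cylinders shrink to `x`; hence
continuity of `J` on `Ω_S` gives `ℙ[x]_{n+1} / ℙ[Tx]_n → J x`. Chaining these one-step limits
along `ω, Tω, …, T^{r-1}ω` gives `ℙ[ω]_{n+r} / ℙ[T^r ω]_n → ∏ J(T^j ω)`, and `T^r ω = ω`.
-/

open Set PiNat ENNReal

theorem dist_lintegral_ofReal_div_le {α : Type*} [MeasurableSpace α] {μ : Measure α}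
    {f : α → ℝ} {c ε : ℝ} (hμ : μ univ ≠ ∞) (hf₀ : ∫⁻ x, ENNReal.ofReal (f x) ∂μ ≠ 0)
    (hf : ∀ᵐ x ∂μ, dist (f x) c ≤ ε) :
    dist ((∫⁻ x, ENNReal.ofReal (f x) ∂μ).toReal / (μ univ).toReal) c ≤ ε := by
  have hf' : ∀ᵐ x ∂μ, c - ε ≤ f x ∧ f x ≤ c + ε :=
    hf.mono fun x hx => by rw [Real.dist_eq, abs_le] at hx; constructor <;> linarith
  have hupper : ∫⁻ x, ENNReal.ofReal (f x) ∂μ ≤ ENNReal.ofReal (c + ε) * μ univ := by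
    rw [← lintegral_const]
    exact lintegral_mono_ae (hf'.mono fun x hx => ENNReal.ofReal_le_ofReal hx.2)
  have hlower : ENNReal.ofReal (c - ε) * μ univ ≤ ∫⁻ x, ENNReal.ofReal (f x) ∂μ := by
    rw [← lintegral_const]
    exact lintegral_mono_ae (hf'.mono fun x hx => ENNReal.ofReal_le_ofReal hx.1)
  have hcε : 0 ≤ c + ε := by
    by_contra! h
    exact hf₀ (le_zero_iff.1 (by simpa [ENNReal.ofReal_of_nonpos h.le] using hupper))
  have hμ₀ : 0 < (μ univ).toReal := by
    refine ENNReal.toReal_pos (fun h => hf₀ ?_) hμ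
    rw [Measure.measure_univ_eq_zero.1 h, lintegral_zero_measure]
  have hI := ENNReal.toReal_mono (mul_ne_top ofReal_ne_top hμ) hupper
  have hI' := ENNReal.toReal_mono (ne_top_of_le_ne_top (mul_ne_top ofReal_ne_top hμ) hupper) hlower
  rw [toReal_mul, toReal_ofReal hcε] at hI
  rw [toReal_mul, toReal_ofReal'] at hI'
  rw [Real.dist_eq, abs_sub_le_iff, sub_le_iff_le_add, sub_le_comm, div_le_iff₀ hμ₀,
    le_div_iff₀ hμ₀]
  constructor
  · linarith
  · nlinarith [le_max_left (c - ε) 0]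

namespace PiNat

variable {𝒜 : Type*}

theorem hasBasis_nhds_cylinder [TopologicalSpace 𝒜] [DiscreteTopology 𝒜] (x : ℕ → 𝒜) :
    (𝓝 x).HasBasis (fun _ => True) (cylinder x) := by
  refine ⟨fun u => ⟨fun hu => ?_, fun ⟨n, _, hn⟩ =>
    Filter.mem_of_superset ((isOpen_cylinder _ x n).mem_nhds (self_mem_cylinder x n)) hn⟩⟩
  obtain ⟨_, ⟨y, n, rfl⟩, hx, hsub⟩ := (isTopologicalBasis_cylinders _).mem_nhds_iff.1 hu
  exact ⟨n, trivial, mem_cylinder_iff_eq.1 hx ▸ hsub⟩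

theorem measurableSet_cylinder [MeasurableSpace 𝒜] [MeasurableSingletonClass 𝒜]
    (x : ℕ → 𝒜) (n : ℕ) : MeasurableSet (cylinder x n) := by
  rw [cylinder_eq_pi]
  exact MeasurableSet.pi (Set.to_countable _) fun i _ => measurableSet_singleton _

end PiNat

section Shift

variable {𝒜 : Type*}

theorem shift_iterate_apply (x : ℕ → 𝒜) (j n : ℕ) : shift^[j] x n = x (n + j) := by
  induction j generalizing x with
  | zero => rfl
  | succ j ih => rw [Function.iterate_succ_apply, ih, shift, add_assoc]

theorem image_shift_cylinder_succ (x : ℕ → 𝒜) (n : ℕ) :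
    shift '' cylinder x (n + 1) = cylinder (shift x) n := by
  ext y
  constructor
  · rintro ⟨z, hz, rfl⟩ i hi
    exact hz (i + 1) (by omega)
  · intro hy
    refine ⟨fun i => Nat.casesOn i (x 0) y, fun i hi => ?_, rfl⟩
    cases i with
    | zero => rfl
    | succ i => exact hy i (by omega)

theorem cylinder_add_subset_preimage_shift_iterate (x : ℕ → 𝒜) (n j : ℕ) :
    cylinder x (n + j) ⊆ shift^[j] ⁻¹' cylinder (shift^[j] x) n := fun y hy i hi => by
  simp only [shift_iterate_apply]
  exact hy (i + j) (by omega)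

theorem measure_cylinder_add_le_measure_cylinder_shift_iterate [MeasurableSpace 𝒜]
    [MeasurableSingletonClass 𝒜] {ℙ : Measure (ℕ → 𝒜)} (hℙ : MeasurePreserving shift ℙ ℙ)
    (x : ℕ → 𝒜) (n j : ℕ) :
    ℙ (cylinder x (n + j)) ≤ ℙ (cylinder (shift^[j] x) n) :=
  (measure_mono (cylinder_add_subset_preimage_shift_iterate x n j)).trans_eq
    ((hℙ.iterate j).measure_preimage (measurableSet_cylinder _ n).nullMeasurableSet)

end Shift

section MarkovShift

variable {𝒜 : Type*}

def markovShift (S : 𝒜 → 𝒜 → Prop) : Set (ℕ → 𝒜) := {x | ∀ i, S (x i) (x (i + 1))}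

theorem measurableSet_markovShift [Countable 𝒜] [MeasurableSpace 𝒜] [MeasurableSingletonClass 𝒜]
    (S : 𝒜 → 𝒜 → Prop) : MeasurableSet (markovShift S) := by
  have : markovShift S = ⋂ i, (fun x : ℕ → 𝒜 => (x i, x (i + 1))) ⁻¹' {p | S p.1 p.2} := by
    ext; simp [markovShift]
  exact this ▸ MeasurableSet.iInter fun i =>
    ((measurable_pi_apply i).prodMk (measurable_pi_apply (i + 1)))
      (Set.to_countable {p : 𝒜 × 𝒜 | S p.1 p.2}).measurableSet

theorem mapsTo_shift_markovShift (S : 𝒜 → 𝒜 → Prop) :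
    MapsTo shift (markovShift S) (markovShift S) := fun _ hx i => hx (i + 1)

theorem image_shift_cylinder_diff_markovShift_subset {S : 𝒜 → 𝒜 → Prop} {x : ℕ → 𝒜}
    (hx : x ∈ markovShift S) {n : ℕ} (hn : 2 ≤ n) :
    shift '' (cylinder x n \ markovShift S) ⊆ (markovShift S)ᶜ := by
  rintro _ ⟨y, ⟨hy, hyS⟩, rfl⟩ hshift
  refine hyS fun i => ?_
  cases i with
  | zero => rw [hy 0 (by omega), hy 1 (by omega)]; exact hx 0
  | succ i => exact hshift i

end MarkovShift

section ShiftPushforward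

variable {𝒜 : Type*} [MeasurableSpace 𝒜] {ℙ ν : Measure (ℕ → 𝒜)} {E : Set (ℕ → 𝒜)}

theorem measure_eq_measure_image_shift_of_forall_eq
    (hν : ∀ E, MeasurableSet E → ν E = ∑' a : 𝒜, ℙ (shift '' (E ∩ {x | x 0 = a})))
    (hE : MeasurableSet E) {a : 𝒜} (hEa : ∀ x ∈ E, x 0 = a) : ν E = ℙ (shift '' E) := by
  rw [hν E hE, tsum_eq_single a fun b hb => ?_]
  · rw [inter_eq_left.2 (show E ⊆ {x | x 0 = a} from hEa)]
  · have : E ∩ {x | x 0 = b} = ∅ :=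
      eq_empty_iff_forall_notMem.2 fun x hx => hb (hx.2.symm.trans (hEa x hx.1))
    rw [this, image_empty, measure_empty]

theorem measure_eq_zero_of_measure_image_shift_eq_zero
    (hν : ∀ E, MeasurableSet E → ν E = ∑' a : 𝒜, ℙ (shift '' (E ∩ {x | x 0 = a})))
    (hE : MeasurableSet E) (h : ℙ (shift '' E) = 0) : ν E = 0 := by
  rw [hν E hE, ENNReal.tsum_eq_zero]
  exact fun a => measure_mono_null (image_mono inter_subset_left) h

end ShiftPushforward

section ConditionalLimit

variable {𝒜 : Type*} [Countable 𝒜] [MeasurableSpace 𝒜] [MeasurableSingletonClass 𝒜]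
  [TopologicalSpace 𝒜] [DiscreteTopology 𝒜] {S : 𝒜 → 𝒜 → Prop} {ℙ ν : Measure (ℕ → 𝒜)}
  [IsFiniteMeasure ℙ] {J : (ℕ → 𝒜) → ℝ}

theorem tendsto_measure_cylinder_succ_div
    (hν : ∀ E, MeasurableSet E → ν E = ∑' a : 𝒜, ℙ (shift '' (E ∩ {x | x 0 = a})))
    (hRN : ∀ E, MeasurableSet E → ℙ E = ∫⁻ x in E, ENNReal.ofReal (J x) ∂ν)
    (hJ : ContinuousOn J (markovShift S)) (hS : ℙ (markovShift S)ᶜ = 0)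
    {x : ℕ → 𝒜} (hx : x ∈ markovShift S) (hpos : ∀ n, ℙ (cylinder x n) ≠ 0) :
    Tendsto (fun n => (ℙ (cylinder x (n + 1))).toReal / (ℙ (cylinder (shift x) n)).toReal)
      atTop (𝓝 (J x)) := by
  refine (atTop_basis.tendsto_iff Metric.nhds_basis_closedBall).2 fun ε hε => ?_
  obtain ⟨N, -, hN⟩ :=
    (((hasBasis_nhds_cylinder x).inf_principal _).tendsto_iff Metric.nhds_basis_closedBall).1
      (hJ x hx) ε hε
  refine ⟨max N 1, trivial, fun n hn => ?_⟩
  have hNn : N ≤ n + 1 ∧ 2 ≤ n + 1 := by simp only [mem_Ici, max_le_iff] at hn; omega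
  set E := cylinder x (n + 1)
  have hE : MeasurableSet E := measurableSet_cylinder x _
  have hνE : ν E = ℙ (cylinder (shift x) n) := by
    rw [measure_eq_measure_image_shift_of_forall_eq hν hE fun y hy => hy 0 (by omega),
      image_shift_cylinder_succ]
  have hnull : ν (E \ markovShift S) = 0 :=
    measure_eq_zero_of_measure_image_shift_eq_zero hν (hE.diff (measurableSet_markovShift S))
      (measure_mono_null (image_shift_cylinder_diff_markovShift_subset hx hNn.2) hS)
  have hJE : ∀ᵐ y ∂ν.restrict E, dist (J y) (J x) ≤ ε := by
    rw [ae_restrict_iff' hE]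
    filter_upwards [measure_eq_zero_iff_ae_notMem.1 hnull] with y hyS hyE
    exact hN y ⟨cylinder_anti x hNn.1 hyE, by_contra fun h => hyS ⟨hyE, h⟩⟩
  have := dist_lintegral_ofReal_div_le
    (by rw [Measure.restrict_apply_univ, hνE]; exact measure_ne_top _ _)
    (by rw [← hRN E hE]; exact hpos _) hJE
  rwa [← hRN E hE, Measure.restrict_apply_univ, hνE] at this

theorem tendsto_measure_cylinder_add_div
    (hν : ∀ E, MeasurableSet E → ν E = ∑' a : 𝒜, ℙ (shift '' (E ∩ {x | x 0 = a})))
    (hRN : ∀ E, MeasurableSet E → ℙ E = ∫⁻ x in E, ENNReal.ofReal (J x) ∂ν)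
    (hJ : ContinuousOn J (markovShift S)) (hS : ℙ (markovShift S)ᶜ = 0)
    {x : ℕ → 𝒜} (hx : x ∈ markovShift S) (hpos : ∀ j n, ℙ (cylinder (shift^[j] x) n) ≠ 0)
    (k : ℕ) :
    Tendsto (fun n => (ℙ (cylinder x (n + k))).toReal / (ℙ (cylinder (shift^[k] x) n)).toReal)
      atTop (𝓝 (∏ j ∈ Finset.range k, J (shift^[j] x))) := by
  have hpos' (j n : ℕ) : (ℙ (cylinder (shift^[j] x) n)).toReal ≠ 0 :=
    ENNReal.toReal_ne_zero.2 ⟨hpos j n, measure_ne_top _ _⟩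
  induction k with
  | zero =>
    exact tendsto_const_nhds.congr fun n => (div_self (hpos' 0 n)).symm
  | succ k ih =>
    have hstep := tendsto_measure_cylinder_succ_div hν hRN hJ hS
      ((mapsTo_shift_markovShift S).iterate k hx) (hpos k)
    rw [Finset.prod_range_succ]
    refine ((ih.comp (tendsto_add_atTop_nat 1)).mul hstep).congr fun n => ?_
    rw [Function.comp_apply, div_mul_div_cancel₀ (hpos' k (n + 1)), add_right_comm,
      ← add_assoc, Function.iterate_succ_apply']

end ConditionalLimit

theorem conditional_limit_of_continuous_jacobian_general {𝒜 : Type*} [Countable 𝒜]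
    [MeasurableSpace 𝒜] [MeasurableSingletonClass 𝒜]
    [TopologicalSpace 𝒜] [DiscreteTopology 𝒜]
    (S : 𝒜 → 𝒜 → Prop)
    (ΩS : Set (ℕ → 𝒜)) (hΩS : ΩS = {γ | ∀ i, S (γ i) (γ (i + 1))})
    (ℙ : Measure (ℕ → 𝒜)) [IsProbabilityMeasure ℙ]
    (hinv : MeasurePreserving shift ℙ ℙ) (hΩS1 : ℙ ΩS = 1)
    (ν : Measure (ℕ → 𝒜))
    (hν : ∀ E : Set (ℕ → 𝒜), MeasurableSet E →
      ν E = ∑' a : 𝒜, ℙ (shift '' (E ∩ {γ | γ 0 = a})))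
    (J : (ℕ → 𝒜) → ℝ) (hJcont : ContinuousOn J ΩS)
    (hRN : ∀ E : Set (ℕ → 𝒜), MeasurableSet E →
      ℙ E = ∫⁻ γ in E, ENNReal.ofReal (J γ) ∂ν)
    (ω : ℕ → 𝒜) (hω : ω ∈ ΩS) (r : ℕ)
    (hper : ∀ i, ω (i + r) = ω i)
    (hsupp : ∀ n, 0 < ℙ {γ | ∀ i < n, γ i = ω i}) :
    Tendsto (fun n => (ℙ {γ | ∀ i < n + r, γ i = ω i}).toReal /
        (ℙ {γ | ∀ i < n, γ i = ω i}).toReal) atTop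
      (𝓝 (∏ j ∈ Finset.range r, J (shift^[j] ω))) := by
  change ΩS = markovShift S at hΩS
  subst hΩS
  have hS : ℙ (markovShift S)ᶜ = 0 := (prob_compl_eq_zero_iff (measurableSet_markovShift S)).2 hΩS1
  have hpos (j n : ℕ) : ℙ (cylinder (shift^[j] ω) n) ≠ 0 :=
    ((hsupp (n + j)).trans_le
      (measure_cylinder_add_le_measure_cylinder_shift_iterate hinv ω n j)).ne'
  have hperiod : shift^[r] ω = ω := funext fun i => (shift_iterate_apply ω r i).trans (hper i)
  have := tendsto_measure_cylinder_add_div hν hRN hJcont hS hω hpos r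
  rwa [hperiod] at this

/-- on a topologically mixing topological Markov shift `Ω_S` with a
shift-invariant probability measure `ℙ` supported on `Ω_S`, if the inverse Jacobian
`J = dℙ/d(ℙ∘T)` has a continuous version, then for every periodic `ω ∈ supp ℙ` with
minimal period `r`, `lim_n ℙ(A_{n+r}^ω | A_n^ω) = ∏_{j=0}^{r-1} J(T^j ω)`. -/
theorem conditional_limit_of_continuous_jacobian {𝒜 : Type*} [Countable 𝒜]
    [MeasurableSpace 𝒜] [MeasurableSingletonClass 𝒜]
    [TopologicalSpace 𝒜] [DiscreteTopology 𝒜]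
    (S : 𝒜 → 𝒜 → Prop)
    (ΩS : Set (ℕ → 𝒜)) (hΩS : ΩS = {γ | ∀ i, S (γ i) (γ (i + 1))})
    (hmixing : ∀ U V : Set (ℕ → 𝒜), IsOpen U → IsOpen V →
      (U ∩ ΩS).Nonempty → (V ∩ ΩS).Nonempty →
      ∃ M : ℕ, ∀ n ≥ M, ((U ∩ ΩS) ∩ (shift^[n]) ⁻¹' (V ∩ ΩS)).Nonempty)
    (ℙ : Measure (ℕ → 𝒜)) [IsProbabilityMeasure ℙ]
    (hinv : MeasurePreserving shift ℙ ℙ) (hΩS1 : ℙ ΩS = 1)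
    (ν : Measure (ℕ → 𝒜))
    (hν : ∀ E : Set (ℕ → 𝒜), MeasurableSet E →
      ν E = ∑' a : 𝒜, ℙ (shift '' (E ∩ {γ | γ 0 = a})))
    (J : (ℕ → 𝒜) → ℝ) (hJcont : ContinuousOn J ΩS)
    (hRN : ∀ E : Set (ℕ → 𝒜), MeasurableSet E →
      ℙ E = ∫⁻ γ in E, ENNReal.ofReal (J γ) ∂ν)
    (ω : ℕ → 𝒜) (hω : ω ∈ ΩS) (r : ℕ) (hr : 0 < r)
    (hper : ∀ i, ω (i + r) = ω i)
    (hmin : ∀ r', 0 < r' → r' < r → ∃ i, ω (i + r') ≠ ω i)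
    (hsupp : ∀ n, 0 < ℙ {γ | ∀ i < n, γ i = ω i}) :
    Tendsto (fun n => (ℙ {γ | ∀ i < n + r, γ i = ω i}).toReal /
        (ℙ {γ | ∀ i < n, γ i = ω i}).toReal) atTop
      (𝓝 (∏ j ∈ Finset.range r, J (shift^[j] ω))) :=
  conditional_limit_of_continuous_jacobian_general S ΩS hΩS ℙ hinv hΩS1 ν hν J hJcont hRN ω hω r
    hper hsupp
end
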